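/- arXiv:2108.11683 — 4 statements merged into one kernel-verified Lean document; each statement's English description precedes it below -/
import Mathlib

section
/- Let H be a real separable Hilbert space and γ > 0 fixed. For all A, B ∈ Sym⁺(H) ∩ HS(H), the operator log(γI + A) − log(γI + B) is Hilbert–Schmidt and ‖log(γI + A) − log(γI + B)‖_HS ≤ (1/γ)‖A − B‖_HS. -/
open scoped RealInnerProductSpace
open MeasureTheory Filter

noncomputable section

variable {H : Type*} [NormedAddCommGroup H] [InnerProductSpace ℝ H] [CompleteSpace H]

/-- Operator logarithm: for a bounded self-adjoint positive definite operator `T` this agrees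
with the logarithm given by the continuous functional (spectral) calculus; it is defined via the
integral formula `log T = ∫₀¹ (T − I)(I + t(T − I))⁻¹ dt`. -/
noncomputable def opLog (T : H →L[ℝ] H) : H →L[ℝ] H :=
  ∫ t in (0:ℝ)..1, (T - 1) * Ring.inverse (1 + t • (T - 1))

/-- Real powers of an operator: `T ^ r = exp (r · log T)`, agreeing with the continuous
functional (spectral) calculus powers for self-adjoint positive definite `T`. -/
noncomputable def opPow (T : H →L[ℝ] H) (r : ℝ) : H →L[ℝ] H :=
  NormedSpace.exp (r • opLog T)

variable {E F : Type*} [NormedAddCommGroup E] [InnerProductSpace ℝ E]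
  [NormedAddCommGroup F] [InnerProductSpace ℝ F]

/-- `T : E →L[ℝ] F` is a Hilbert–Schmidt operator, expressed w.r.t. the Hilbert basis `e`
of `E` (the notion is independent of the choice of basis). -/
def IsHS {ι : Type*} (e : HilbertBasis ι ℝ E) (T : E →L[ℝ] F) : Prop :=
  Summable fun i => ‖T (e i)‖ ^ 2

/-- The Hilbert–Schmidt norm of `T`, computed w.r.t. the Hilbert basis `e` of the domain. -/
noncomputable def hsNorm {ι : Type*} (e : HilbertBasis ι ℝ E) (T : E →L[ℝ] F) : ℝ :=
  Real.sqrt (∑' i, ‖T (e i)‖ ^ 2)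

set_option linter.unusedSectionVars false
set_option maxHeartbeats 1000000

lemma aux_coercive_isUnit {T : H →L[ℝ] H} {c : ℝ} (hc : 0 < c)
    (hcoer : ∀ x, c * ‖x‖ ^ 2 ≤ ⟪x, T x⟫) : IsUnit T := by
  have hlow : ∀ x, c * ‖x‖ ≤ ‖T x‖ := by
    intro x
    rcases eq_or_ne x 0 with rfl | hx
    · simp
    · have h1 : c * ‖x‖ ^ 2 ≤ ‖x‖ * ‖T x‖ := (hcoer x).trans (real_inner_le_norm _ _)
      have hxpos : 0 < ‖x‖ := norm_pos_iff.mpr hx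
      nlinarith
  have hker : T.ker = ⊥ := by
    rw [LinearMap.ker_eq_bot]
    intro x y hxy
    have : c * ‖x - y‖ ≤ ‖T (x - y)‖ := hlow _
    rw [map_sub, (show T x = T y from hxy), sub_self, norm_zero] at this
    have : ‖x - y‖ ≤ 0 := by nlinarith [norm_nonneg (x - y)]
    have := le_antisymm this (norm_nonneg _)
    rwa [norm_eq_zero, sub_eq_zero] at this
  have hanti : AntilipschitzWith (c⁻¹).toNNReal T := by
    refine ContinuousLinearMap.antilipschitz_of_bound T ?_
    intro x
    rw [Real.coe_toNNReal _ (inv_nonneg.mpr hc.le)]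
    rw [← inv_mul_le_iff₀ (by positivity : (0:ℝ) < c⁻¹)] at *
    simpa [inv_inv] using hlow x
  have hclosed : IsClosed (T.range : Set H) := by
    rw [LinearMap.coe_range]; exact hanti.isClosed_range T.uniformContinuous
  have hrange : T.range = ⊤ := by
    haveI := hclosed.completeSpace_coe
    rw [← T.range.orthogonal_orthogonal]
    rw [Submodule.eq_top_iff']
    intro v w hw
    obtain rfl : w = 0 := by
      have h0 : ⟪T w, w⟫ = 0 := hw _ ⟨w, rfl⟩
      have h1 : c * ‖w‖ ^ 2 ≤ 0 := by
        calc c * ‖w‖ ^ 2 ≤ ⟪w, T w⟫ := hcoer w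
        _ = ⟪T w, w⟫ := real_inner_comm _ _
        _ = 0 := h0
      have hw2 : ‖w‖ ^ 2 ≤ 0 := by
        by_contra hcon
        push_neg at hcon
        nlinarith [mul_pos hc hcon]
      have : ‖w‖ = 0 := by nlinarith [sq_nonneg ‖w‖, norm_nonneg w]
      simpa using this
    simp
  let eqv := ContinuousLinearEquiv.ofBijective T hker hrange
  have hTe : (eqv : H →L[ℝ] H) = T := rfl
  exact ⟨⟨T, eqv.symm, by ext x; simp [← hTe, ContinuousLinearMap.mul_apply],
    by ext x; simp [← hTe, ContinuousLinearMap.mul_apply]⟩, rfl⟩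

lemma aux_inverse_norm_le {T : H →L[ℝ] H} (hU : IsUnit T) {c : ℝ} (hc : 0 < c)
    (h : ∀ x, c * ‖x‖ ≤ ‖T x‖) : ‖Ring.inverse T‖ ≤ c⁻¹ := by
  refine ContinuousLinearMap.opNorm_le_bound _ (by positivity) fun y => ?_
  have h2 : T * Ring.inverse T = 1 := Ring.mul_inverse_cancel T hU
  have h3 : T (Ring.inverse T y) = y := by
    have := congrArg (fun S : H →L[ℝ] H => S y) h2
    simpa [ContinuousLinearMap.mul_apply] using this
  have := h (Ring.inverse T y)
  rw [h3] at this
  exact (le_inv_mul_iff₀ hc).mpr this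

lemma aux_inverse_isSelfAdjoint {T : H →L[ℝ] H} (hU : IsUnit T) (hT : IsSelfAdjoint T) :
    IsSelfAdjoint (Ring.inverse T) := by
  obtain ⟨u, rfl⟩ := hU
  rw [Ring.inverse_unit]
  have : star ((u⁻¹ : (H →L[ℝ] H)ˣ) : H →L[ℝ] H) = ((u⁻¹ : (H →L[ℝ] H)ˣ) : H →L[ℝ] H) := by
    have h1 : star (u : H →L[ℝ] H) * ((u⁻¹ : (H →L[ℝ] H)ˣ) : H →L[ℝ] H) = 1 := by
      rw [hT.star_eq]; exact u.mul_inv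
    have h2 : ((u⁻¹ : (H →L[ℝ] H)ˣ) : H →L[ℝ] H) * star (u : H →L[ℝ] H) = 1 := by
      rw [hT.star_eq]; exact u.inv_mul
    calc star ((u⁻¹:(H →L[ℝ] H)ˣ) : H →L[ℝ] H)
        = star ((u⁻¹:(H →L[ℝ] H)ˣ) : H →L[ℝ] H) * (star (u : H →L[ℝ] H) *
            ((u⁻¹ : (H →L[ℝ] H)ˣ) : H →L[ℝ] H)) := by rw [h1, mul_one]
      _ = (star ((u⁻¹:(H →L[ℝ] H)ˣ) : H →L[ℝ] H) * star (u : H →L[ℝ] H)) *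
            ((u⁻¹ : (H →L[ℝ] H)ˣ) : H →L[ℝ] H) := by rw [mul_assoc]
      _ = star ((u : H →L[ℝ] H) * ((u⁻¹:(H →L[ℝ] H)ˣ) : H →L[ℝ] H)) *
            ((u⁻¹ : (H →L[ℝ] H)ˣ) : H →L[ℝ] H) := by rw [star_mul]
      _ = ((u⁻¹ : (H →L[ℝ] H)ˣ) : H →L[ℝ] H) := by rw [u.mul_inv]; simp
  exact this

lemma aux_parseval {ι : Type*} (e : HilbertBasis ι ℝ H) (x : H) :
    (Summable fun j => ⟪e j, x⟫ ^ 2) ∧ ∑' j, ⟪e j, x⟫ ^ 2 = ‖x‖ ^ 2 := by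
  have hs := e.summable_inner_mul_inner x x
  have ht := e.tsum_inner_mul_inner x x
  have hconv : (fun i => ⟪x, e i⟫ * ⟪e i, x⟫) = fun i => ⟪e i, x⟫ ^ 2 := by
    funext i; rw [real_inner_comm x (e i)]; ring
  rw [hconv] at hs ht
  exact ⟨hs, by rw [ht, real_inner_self_eq_norm_sq]⟩

lemma aux_keysum {ι : Type*} (e : HilbertBasis ι ℝ H) {C S : H →L[ℝ] H}
    (hC : IsSelfAdjoint C) (hS : IsSelfAdjoint S)
    (hCs : Summable fun i => ‖C (e i)‖ ^ 2) (s : Finset ι) :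
    ∑ i ∈ s, ‖C (S (e i))‖ ^ 2 ≤ ‖S‖ ^ 2 * ∑' i, ‖C (e i)‖ ^ 2 := by
  have hswap : ∀ (i j : ι), ⟪e j, C (S (e i))⟫ = ⟪e i, S (C (e j))⟫ := by
    intro i j
    calc ⟪e j, C (S (e i))⟫ = ⟪C (e j), S (e i)⟫ := (hC.isSymmetric (e j) (S (e i))).symm
      _ = ⟪S (C (e j)), e i⟫ := (hS.isSymmetric (C (e j)) (e i)).symm
      _ = ⟪e i, S (C (e j))⟫ := real_inner_comm _ _
  have hsummf : ∀ i : ι, Summable fun j => ⟪e i, S (C (e j))⟫ ^ 2 := by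
    intro i
    have := (aux_parseval e (C (S (e i)))).1
    refine this.congr fun j => ?_
    rw [hswap]
  have h1 : ∑ i ∈ s, ‖C (S (e i))‖ ^ 2 = ∑' j, ∑ i ∈ s, ⟪e i, S (C (e j))⟫ ^ 2 := by
    rw [Summable.tsum_finsetSum (fun i _ => hsummf i)]
    refine Finset.sum_congr rfl fun i _ => ?_
    rw [← (aux_parseval e (C (S (e i)))).2]
    exact tsum_congr fun j => by rw [hswap]
  have hbound : ∀ j : ι, ∑ i ∈ s, ⟪e i, S (C (e j))⟫ ^ 2 ≤ ‖S‖ ^ 2 * ‖C (e j)‖ ^ 2 := by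
    intro j
    have hb : ∑ i ∈ s, ⟪e i, S (C (e j))⟫ ^ 2 ≤ ‖S (C (e j))‖ ^ 2 := by
      rw [← (aux_parseval e (S (C (e j)))).2]
      exact Summable.sum_le_tsum s (fun i _ => sq_nonneg _) (aux_parseval e (S (C (e j)))).1
    refine hb.trans ?_
    rw [← mul_pow]
    exact pow_le_pow_left₀ (norm_nonneg _) (S.le_opNorm _) 2
  have hRS : Summable fun j => ‖S‖ ^ 2 * ‖C (e j)‖ ^ 2 := hCs.mul_left _
  have hLS : Summable fun j => ∑ i ∈ s, ⟪e i, S (C (e j))⟫ ^ 2 :=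
    Summable.of_nonneg_of_le (fun j => Finset.sum_nonneg fun i _ => sq_nonneg _) hbound hRS
  rw [h1, ← tsum_mul_left]
  exact Summable.tsum_le_tsum hbound hLS hRS

lemma aux_c_pos {γ : ℝ} (hγ : 0 < γ) {t : ℝ} (ht : t ∈ Set.Icc (0:ℝ) 1) :
    0 < 1 + t * (γ - 1) := by
  rcases lt_or_ge t 1 with h1 | h1
  · nlinarith [mul_nonneg ht.1 hγ.le]
  · have : t = 1 := le_antisymm ht.2 h1
    subst this; linarith

lemma aux_integral_c {γ : ℝ} (hγ : 0 < γ) :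
    ∫ t in (0:ℝ)..1, ((1 + t * (γ - 1))⁻¹) ^ 2 = 1 / γ := by
  have huIcc : Set.uIcc (0:ℝ) 1 = Set.Icc 0 1 := Set.uIcc_of_le zero_le_one
  have hne : ∀ t ∈ Set.Icc (0:ℝ) 1, 1 + t * (γ - 1) ≠ 0 := fun t ht => (aux_c_pos hγ ht).ne'
  have key : ∀ t ∈ Set.uIcc (0:ℝ) 1,
      HasDerivAt (fun t => t / (1 + t * (γ - 1))) (((1 + t * (γ - 1))⁻¹) ^ 2) t := by
    intro t ht
    rw [huIcc] at ht
    have h1 : HasDerivAt (fun t : ℝ => t) 1 t := hasDerivAt_id t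
    have h2 : HasDerivAt (fun t : ℝ => 1 + t * (γ - 1)) (γ - 1) t := by
      simpa using ((hasDerivAt_id t).mul_const (γ - 1)).const_add 1
    have := h1.div h2 (hne t ht)
    refine this.congr_deriv ?_
    rw [inv_pow, ← one_div]; congr 1; ring
    try ring
  have hcont : ContinuousOn (fun t : ℝ => ((1 + t * (γ - 1))⁻¹) ^ 2) (Set.Icc 0 1) := by
    exact ((continuousOn_const.add (continuousOn_id.mul continuousOn_const)).inv₀ hne).pow 2
  have hint : IntervalIntegrable (fun t : ℝ => ((1 + t * (γ - 1))⁻¹) ^ 2) volume 0 1 := by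
    rw [← huIcc] at hcont
    exact hcont.intervalIntegrable
  rw [intervalIntegral.integral_eq_sub_of_hasDerivAt key hint]
  norm_num

lemma aux_low {T : H →L[ℝ] H} {c : ℝ} (hc : 0 < c)
    (hcoer : ∀ x, c * ‖x‖ ^ 2 ≤ ⟪x, T x⟫) : ∀ x, c * ‖x‖ ≤ ‖T x‖ := by
  intro x
  rcases eq_or_ne x 0 with rfl | hx
  · simp
  · have h1 : c * ‖x‖ ^ 2 ≤ ‖x‖ * ‖T x‖ := (hcoer x).trans (real_inner_le_norm _ _)
    have hxpos : 0 < ‖x‖ := norm_pos_iff.mpr hx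
    nlinarith

lemma aux_identity {X Y : H →L[ℝ] H} {t : ℝ} (hX : IsUnit (1 + t • X)) (hY : IsUnit (1 + t • Y)) :
    X * Ring.inverse (1 + t • X) - Y * Ring.inverse (1 + t • Y)
      = Ring.inverse (1 + t • X) * (X - Y) * Ring.inverse (1 + t • Y) := by
  obtain ⟨U, hU⟩ := hX
  obtain ⟨V, hV⟩ := hY
  rw [← hU, ← hV, Ring.inverse_unit, Ring.inverse_unit]
  have hcomm : Commute X (U : H →L[ℝ] H) := by
    show X * (U : H →L[ℝ] H) = (U : H →L[ℝ] H) * X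
    rw [hU]
    ext x
    simp [ContinuousLinearMap.mul_apply, ContinuousLinearMap.add_apply,
      ContinuousLinearMap.smul_apply, ContinuousLinearMap.one_apply, _root_.map_smul]
  have hcomminv : Commute X ((U⁻¹ : (H →L[ℝ] H)ˣ) : H →L[ℝ] H) := hcomm.units_inv_right
  have hXV : X * (V : H →L[ℝ] H) - (U : H →L[ℝ] H) * Y = X - Y := by
    rw [hU, hV]
    ext x
    simp [ContinuousLinearMap.mul_apply, ContinuousLinearMap.add_apply,
      ContinuousLinearMap.sub_apply, ContinuousLinearMap.smul_apply,
      ContinuousLinearMap.one_apply, _root_.map_smul]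
    try abel
  have e1 : ((U⁻¹ : (H →L[ℝ] H)ˣ) : H →L[ℝ] H) * (X * (V : H →L[ℝ] H)) *
      ((V⁻¹ : (H →L[ℝ] H)ˣ) : H →L[ℝ] H) = X * ((U⁻¹ : (H →L[ℝ] H)ˣ) : H →L[ℝ] H) := by
    rw [hcomminv.eq, ← mul_assoc, Units.mul_inv_cancel_right]
  have e2 : ((U⁻¹ : (H →L[ℝ] H)ˣ) : H →L[ℝ] H) * ((U : H →L[ℝ] H) * Y) *
      ((V⁻¹ : (H →L[ℝ] H)ˣ) : H →L[ℝ] H) = Y * ((V⁻¹ : (H →L[ℝ] H)ˣ) : H →L[ℝ] H) := by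
    rw [← mul_assoc, U.inv_mul, one_mul]
  calc X * ((U⁻¹ : (H →L[ℝ] H)ˣ) : H →L[ℝ] H) - Y * ((V⁻¹ : (H →L[ℝ] H)ˣ) : H →L[ℝ] H)
      = ((U⁻¹ : (H →L[ℝ] H)ˣ) : H →L[ℝ] H) * (X * (V : H →L[ℝ] H)) *
          ((V⁻¹ : (H →L[ℝ] H)ˣ) : H →L[ℝ] H)
        - ((U⁻¹ : (H →L[ℝ] H)ˣ) : H →L[ℝ] H) * ((U : H →L[ℝ] H) * Y) *
          ((V⁻¹ : (H →L[ℝ] H)ˣ) : H →L[ℝ] H) := by rw [e1, e2]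
    _ = ((U⁻¹ : (H →L[ℝ] H)ˣ) : H →L[ℝ] H) * (X * (V : H →L[ℝ] H) - (U : H →L[ℝ] H) * Y) *
          ((V⁻¹ : (H →L[ℝ] H)ˣ) : H →L[ℝ] H) := by rw [mul_sub, sub_mul]
    _ = ((U⁻¹ : (H →L[ℝ] H)ˣ) : H →L[ℝ] H) * (X - Y) *
          ((V⁻¹ : (H →L[ℝ] H)ˣ) : H →L[ℝ] H) := by rw [hXV]

lemma aux_coer {γ t : ℝ} (ht : t ∈ Set.Icc (0:ℝ) 1) {A : H →L[ℝ] H}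
    (hApos : ∀ x : H, 0 ≤ ⟪x, A x⟫) (x : H) :
    (1 + t * (γ - 1)) * ‖x‖ ^ 2 ≤ ⟪x, (1 + t • (γ • (1 : H →L[ℝ] H) + A - 1)) x⟫ := by
  have hexp : ⟪x, (1 + t • (γ • (1 : H →L[ℝ] H) + A - 1)) x⟫
      = (1 + t * (γ - 1)) * ‖x‖ ^ 2 + t * ⟪x, A x⟫ := by
    simp only [ContinuousLinearMap.add_apply, ContinuousLinearMap.sub_apply,
      ContinuousLinearMap.smul_apply, ContinuousLinearMap.one_apply]
    rw [inner_add_right, inner_smul_right, inner_sub_right, inner_add_right, inner_smul_right,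
      real_inner_self_eq_norm_sq]
    ring
  rw [hexp]
  nlinarith [mul_nonneg ht.1 (hApos x)]

lemma aux_ops {γ : ℝ} (hγ : 0 < γ) {A : H →L[ℝ] H} (hAsa : IsSelfAdjoint A)
    (hApos : ∀ x : H, 0 ≤ ⟪x, A x⟫) {t : ℝ} (ht : t ∈ Set.Icc (0:ℝ) 1) :
    IsUnit (1 + t • (γ • (1 : H →L[ℝ] H) + A - 1)) ∧
    ‖Ring.inverse (1 + t • (γ • (1 : H →L[ℝ] H) + A - 1))‖ ≤ (1 + t * (γ - 1))⁻¹ ∧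
    IsSelfAdjoint (Ring.inverse (1 + t • (γ • (1 : H →L[ℝ] H) + A - 1))) := by
  have hc : 0 < 1 + t * (γ - 1) := aux_c_pos hγ ht
  have hcoer := fun x => aux_coer (γ := γ) ht hApos x
  have hU : IsUnit (1 + t • (γ • (1 : H →L[ℝ] H) + A - 1)) := aux_coercive_isUnit hc hcoer
  have hlow := aux_low hc hcoer
  have hsa : IsSelfAdjoint (1 + t • (γ • (1 : H →L[ℝ] H) + A - 1)) := by
    have h1 : IsSelfAdjoint (1 : H →L[ℝ] H) := IsSelfAdjoint.one _
    have h2 : IsSelfAdjoint (γ • (1 : H →L[ℝ] H) + A - 1) :=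
      ((IsSelfAdjoint.smul (star_trivial γ) h1).add hAsa).sub h1
    exact h1.add (IsSelfAdjoint.smul (star_trivial t) h2)
  exact ⟨hU, aux_inverse_norm_le hU hc hlow, aux_inverse_isSelfAdjoint hU hsa⟩

lemma aux_cont_inv {X : H →L[ℝ] H} (hU : ∀ t ∈ Set.Icc (0:ℝ) 1, IsUnit (1 + t • X)) :
    ContinuousOn (fun t : ℝ => Ring.inverse (1 + t • X)) (Set.Icc 0 1) := by
  intro t ht
  have h1 : Continuous (fun t : ℝ => 1 + t • X) :=
    continuous_const.add (continuous_id.smul continuous_const)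
  have h2 := NormedRing.inverse_continuousAt (hU t ht).unit
  rw [IsUnit.unit_spec] at h2
  exact (ContinuousAt.comp (x := t) h2 h1.continuousAt).continuousWithinAt

/-- For positive self-adjoint Hilbert–Schmidt operators `A, B` and `γ > 0`,
`log(γI + A) − log(γI + B)` is Hilbert–Schmidt with
`‖log(γI + A) − log(γI + B)‖_HS ≤ (1/γ) ‖A − B‖_HS`. -/
theorem statement1 {ι : Type*} [Countable ι] (e : HilbertBasis ι ℝ H)
    (γ : ℝ) (hγ : 0 < γ) (A B : H →L[ℝ] H)
    (hAsa : IsSelfAdjoint A) (hApos : ∀ x : H, 0 ≤ ⟪x, A x⟫) (hAHS : IsHS e A)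
    (hBsa : IsSelfAdjoint B) (hBpos : ∀ x : H, 0 ≤ ⟪x, B x⟫) (hBHS : IsHS e B) :
    IsHS e (opLog (γ • (1 : H →L[ℝ] H) + A) - opLog (γ • (1 : H →L[ℝ] H) + B)) ∧
    hsNorm e (opLog (γ • (1 : H →L[ℝ] H) + A) - opLog (γ • (1 : H →L[ℝ] H) + B)) ≤
      (1 / γ) * hsNorm e (A - B) := by
    classical
  have hIcc : Set.uIcc (0:ℝ) 1 = Set.Icc 0 1 := Set.uIcc_of_le zero_le_one
  set X : H →L[ℝ] H := γ • (1 : H →L[ℝ] H) + A - 1 with hXdef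
  set Y : H →L[ℝ] H := γ • (1 : H →L[ℝ] H) + B - 1 with hYdef
  set c : ℝ → ℝ := fun t => 1 + t * (γ - 1) with hcdef
  set RA : ℝ → (H →L[ℝ] H) := fun t => Ring.inverse (1 + t • X) with hRAdef
  set RB : ℝ → (H →L[ℝ] H) := fun t => Ring.inverse (1 + t • Y) with hRBdef
  set D : ℝ → (H →L[ℝ] H) := fun t => RA t * (A - B) * RB t with hDdef
  -- basic facts about c
  have hcpos : ∀ t ∈ Set.Icc (0:ℝ) 1, 0 < c t := fun t ht => aux_c_pos hγ ht
  have hccont : ContinuousOn c (Set.Icc 0 1) :=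
    (continuousOn_const.add (continuousOn_id.mul continuousOn_const))
  -- operator facts
  have hopsA := fun (t : ℝ) (ht : t ∈ Set.Icc (0:ℝ) 1) => aux_ops hγ hAsa hApos (t := t) ht
  have hopsB := fun (t : ℝ) (ht : t ∈ Set.Icc (0:ℝ) 1) => aux_ops hγ hBsa hBpos (t := t) ht
  have hUA : ∀ t ∈ Set.Icc (0:ℝ) 1, IsUnit (1 + t • X) := fun t ht => (hopsA t ht).1
  have hUB : ∀ t ∈ Set.Icc (0:ℝ) 1, IsUnit (1 + t • Y) := fun t ht => (hopsB t ht).1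
  have hRAnorm : ∀ t ∈ Set.Icc (0:ℝ) 1, ‖RA t‖ ≤ (c t)⁻¹ := fun t ht => (hopsA t ht).2.1
  have hRBnorm : ∀ t ∈ Set.Icc (0:ℝ) 1, ‖RB t‖ ≤ (c t)⁻¹ := fun t ht => (hopsB t ht).2.1
  have hRBsa : ∀ t ∈ Set.Icc (0:ℝ) 1, IsSelfAdjoint (RB t) := fun t ht => (hopsB t ht).2.2
  have hCsa : IsSelfAdjoint (A - B) := hAsa.sub hBsa
  -- HS facts about A - B
  have hKsum : Summable fun i => ‖(A - B) (e i)‖ ^ 2 := by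
    have hA' : Summable fun i => ‖A (e i)‖ ^ 2 := hAHS
    have hB' : Summable fun i => ‖B (e i)‖ ^ 2 := hBHS
    refine Summable.of_nonneg_of_le (fun i => sq_nonneg _) (fun i => ?_)
      ((hA'.mul_left 2).add (hB'.mul_left 2))
    have h1 : ‖(A - B) (e i)‖ ≤ ‖A (e i)‖ + ‖B (e i)‖ := by
      rw [ContinuousLinearMap.sub_apply]; exact norm_sub_le _ _
    have h2 : ‖(A - B) (e i)‖ ^ 2 ≤ (‖A (e i)‖ + ‖B (e i)‖) ^ 2 :=
      pow_le_pow_left₀ (norm_nonneg _) h1 2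
    nlinarith [sq_nonneg (‖A (e i)‖ - ‖B (e i)‖)]
  set K : ℝ := ∑' i, ‖(A - B) (e i)‖ ^ 2 with hKdef
  have hKnonneg : 0 ≤ K := tsum_nonneg fun i => sq_nonneg _
  -- continuity
  have hRAcont : ContinuousOn RA (Set.Icc 0 1) := aux_cont_inv hUA
  have hRBcont : ContinuousOn RB (Set.Icc 0 1) := aux_cont_inv hUB
  have hDcont : ContinuousOn D (Set.Icc 0 1) :=
    (hRAcont.mul continuousOn_const).mul hRBcont
  have hDint : IntegrableOn D (Set.Ioc 0 1) volume :=
    hDcont.integrableOn_Icc.mono_set Set.Ioc_subset_Icc_self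
  -- the main integral formula
  have hmain : opLog (γ • (1 : H →L[ℝ] H) + A) - opLog (γ • (1 : H →L[ℝ] H) + B)
      = ∫ t in Set.Ioc (0:ℝ) 1, D t := by
    have hfAcont : ContinuousOn (fun t : ℝ => X * RA t) (Set.Icc 0 1) :=
      continuousOn_const.mul hRAcont
    have hfBcont : ContinuousOn (fun t : ℝ => Y * RB t) (Set.Icc 0 1) :=
      continuousOn_const.mul hRBcont
    have hfAint : IntervalIntegrable (fun t : ℝ => X * RA t) volume 0 1 := by
      rw [← hIcc] at hfAcont; exact hfAcont.intervalIntegrable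
    have hfBint : IntervalIntegrable (fun t : ℝ => Y * RB t) volume 0 1 := by
      rw [← hIcc] at hfBcont; exact hfBcont.intervalIntegrable
    have hXY : X - Y = A - B := by rw [hXdef, hYdef]; abel
    have h1 : opLog (γ • (1 : H →L[ℝ] H) + A) - opLog (γ • (1 : H →L[ℝ] H) + B)
        = ∫ t in (0:ℝ)..1, (X * RA t - Y * RB t) := by
      rw [opLog, opLog, ← intervalIntegral.integral_sub hfAint hfBint]
    have hfun : ∀ t ∈ Set.uIcc (0:ℝ) 1, X * RA t - Y * RB t = D t := by
      intro t ht
      rw [hIcc] at ht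
      have h := aux_identity (hUA t ht) (hUB t ht)
      rw [hXY] at h
      exact h
    rw [h1, intervalIntegral.integral_congr (g := D) (fun t ht => hfun t ht),
      intervalIntegral.integral_of_le zero_le_one]
  -- applying to basis vectors
  have hgi : ∀ i : ι, (opLog (γ • (1 : H →L[ℝ] H) + A) - opLog (γ • (1 : H →L[ℝ] H) + B)) (e i)
      = ∫ t in Set.Ioc (0:ℝ) 1, D t (e i) := by
    intro i
    rw [hmain]
    exact ContinuousLinearMap.integral_apply hDint (e i)
  have hDe_cont : ∀ i : ι, ContinuousOn (fun t => D t (e i)) (Set.Icc (0:ℝ) 1) :=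
    fun i => hDcont.clm_apply continuousOn_const
  have hI1 : ∫ t in Set.Ioc (0:ℝ) 1, ((c t)⁻¹) ^ 2 = 1 / γ := by
    rw [← intervalIntegral.integral_of_le zero_le_one]
    exact aux_integral_c hγ
  have hfc_cont : ContinuousOn (fun t => (c t)⁻¹) (Set.Icc (0:ℝ) 1) :=
    hccont.inv₀ (fun t ht => (hcpos t ht).ne')
  have hf2int : IntegrableOn (fun t => ((c t)⁻¹) ^ 2) (Set.Ioc (0:ℝ) 1) volume :=
    ((hfc_cont.pow 2).integrableOn_Icc).mono_set Set.Ioc_subset_Icc_self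
  have hg_cont : ∀ i : ι, ContinuousOn (fun t => c t * ‖D t (e i)‖) (Set.Icc (0:ℝ) 1) :=
    fun i => hccont.mul (hDe_cont i).norm
  have hg2int : ∀ i : ι, IntegrableOn (fun t => (c t * ‖D t (e i)‖) ^ 2) (Set.Ioc (0:ℝ) 1) volume :=
    fun i => (((hg_cont i).pow 2).integrableOn_Icc).mono_set Set.Ioc_subset_Icc_self
  -- Hölder step
  have hHolder : ∀ i : ι, ‖∫ t in Set.Ioc (0:ℝ) 1, D t (e i)‖ ^ 2
      ≤ (1 / γ) * ∫ t in Set.Ioc (0:ℝ) 1, (c t * ‖D t (e i)‖) ^ 2 := by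
    intro i
    have hb1 : ‖∫ t in Set.Ioc (0:ℝ) 1, D t (e i)‖ ≤ ∫ t in Set.Ioc (0:ℝ) 1, ‖D t (e i)‖ :=
      norm_integral_le_integral_norm _
    have heq : ∫ t in Set.Ioc (0:ℝ) 1, ‖D t (e i)‖
        = ∫ t in Set.Ioc (0:ℝ) 1, ((c t)⁻¹) * (c t * ‖D t (e i)‖) := by
      refine setIntegral_congr_fun measurableSet_Ioc (fun t ht => ?_)
      have h0 : c t ≠ 0 := (hcpos t (Set.Ioc_subset_Icc_self ht)).ne'
      field_simp
    have hpq : Real.HolderConjugate 2 2 := Real.HolderConjugate.two_two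
    have hOfReal : ENNReal.ofReal (2:ℝ) = 2 := by
      rw [ENNReal.ofReal_ofNat]
    have hfm : AEStronglyMeasurable (fun t => (c t)⁻¹)
        (volume.restrict (Set.Ioc (0:ℝ) 1)) :=
      ((continuous_const.add (continuous_id.mul continuous_const)).measurable.inv).aestronglyMeasurable
    have hfmem : MemLp (fun t => (c t)⁻¹) (ENNReal.ofReal 2)
        (volume.restrict (Set.Ioc (0:ℝ) 1)) := by
      rw [hOfReal]
      exact (memLp_two_iff_integrable_sq hfm).mpr hf2int
    have hgm : AEStronglyMeasurable (fun t => c t * ‖D t (e i)‖)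
        (volume.restrict (Set.Ioc (0:ℝ) 1)) :=
      ((hg_cont i).aestronglyMeasurable measurableSet_Icc).mono_measure
        (Measure.restrict_mono Set.Ioc_subset_Icc_self le_rfl)
    have hgmem : MemLp (fun t => c t * ‖D t (e i)‖) (ENNReal.ofReal 2)
        (volume.restrict (Set.Ioc (0:ℝ) 1)) := by
      rw [hOfReal]
      exact (memLp_two_iff_integrable_sq hgm).mpr (hg2int i)
    have hfnn : 0 ≤ᵐ[volume.restrict (Set.Ioc (0:ℝ) 1)] (fun t => (c t)⁻¹) := by
      refine (ae_restrict_iff' measurableSet_Ioc).mpr (ae_of_all _ fun t ht => ?_)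
      exact inv_nonneg.mpr (hcpos t (Set.Ioc_subset_Icc_self ht)).le
    have hgnn : 0 ≤ᵐ[volume.restrict (Set.Ioc (0:ℝ) 1)] (fun t => c t * ‖D t (e i)‖) := by
      refine (ae_restrict_iff' measurableSet_Ioc).mpr (ae_of_all _ fun t ht => ?_)
      exact mul_nonneg (hcpos t (Set.Ioc_subset_Icc_self ht)).le (norm_nonneg _)
    have hH := integral_mul_le_Lp_mul_Lq_of_nonneg hpq hfnn hgnn hfmem hgmem
    have hrpow : ∀ x : ℝ, x ^ (2:ℝ) = x ^ 2 := fun x => by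
      rw [show (2:ℝ) = ((2:ℕ):ℝ) by norm_num, Real.rpow_natCast]
    simp_rw [hrpow] at hH
    rw [hI1] at hH
    have hI2nn : 0 ≤ ∫ t in Set.Ioc (0:ℝ) 1, (c t * ‖D t (e i)‖) ^ 2 :=
      integral_nonneg fun t => sq_nonneg _
    have hle : ‖∫ t in Set.Ioc (0:ℝ) 1, D t (e i)‖
        ≤ (1/γ) ^ ((1:ℝ)/2) * (∫ t in Set.Ioc (0:ℝ) 1, (c t * ‖D t (e i)‖) ^ 2) ^ ((1:ℝ)/2) := by
      refine (hb1.trans_eq heq).trans ?_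
      convert hH using 2 <;> norm_num
    have hsq := pow_le_pow_left₀ (norm_nonneg _) hle 2
    refine hsq.trans_eq ?_
    rw [mul_pow, ← Real.rpow_natCast ((1/γ:ℝ) ^ ((1:ℝ)/2)) 2,
      ← Real.rpow_natCast ((∫ t in Set.Ioc (0:ℝ) 1, (c t * ‖D t (e i)‖) ^ 2) ^ ((1:ℝ)/2)) 2,
      ← Real.rpow_mul (by positivity), ← Real.rpow_mul hI2nn]
    norm_num
  -- partial sums
  have hps : ∀ s : Finset ι,
      ∑ i ∈ s, ‖(opLog (γ • (1 : H →L[ℝ] H) + A) - opLog (γ • (1 : H →L[ℝ] H) + B)) (e i)‖ ^ 2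
        ≤ (1/γ)^2 * K := by
    intro s
    have hpoint : ∀ t ∈ Set.Ioc (0:ℝ) 1,
        ∑ i ∈ s, (c t * ‖D t (e i)‖) ^ 2 ≤ ((c t)⁻¹) ^ 2 * K := by
      intro t ht
      have ht' : t ∈ Set.Icc (0:ℝ) 1 := Set.Ioc_subset_Icc_self ht
      have hct := hcpos t ht'
      have happ : ∀ i : ι, D t (e i) = RA t ((A - B) (RB t (e i))) := fun i => by
        rw [hDdef]
        simp [ContinuousLinearMap.mul_apply]
      have h1 : ∀ i : ι, ‖D t (e i)‖ ^ 2 ≤ ((c t)⁻¹) ^ 2 * ‖(A - B) (RB t (e i))‖ ^ 2 := by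
        intro i
        rw [happ i, ← mul_pow]
        refine pow_le_pow_left₀ (norm_nonneg _) ?_ 2
        exact ((RA t).le_opNorm _).trans
          (mul_le_mul_of_nonneg_right (hRAnorm t ht') (norm_nonneg _))
      have h2 : ∑ i ∈ s, ‖(A - B) (RB t (e i))‖ ^ 2 ≤ ((c t)⁻¹) ^ 2 * K := by
        refine (aux_keysum e hCsa (hRBsa t ht') hKsum s).trans ?_
        refine mul_le_mul_of_nonneg_right ?_ hKnonneg
        exact pow_le_pow_left₀ (norm_nonneg _) (hRBnorm t ht') 2
      have h3 : ∑ i ∈ s, ‖D t (e i)‖ ^ 2 ≤ ((c t)⁻¹) ^ 2 * (((c t)⁻¹) ^ 2 * K) := by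
        refine (Finset.sum_le_sum fun i _ => h1 i).trans ?_
        rw [← Finset.mul_sum]
        exact mul_le_mul_of_nonneg_left h2 (by positivity)
      have h4 : ∑ i ∈ s, (c t * ‖D t (e i)‖) ^ 2 = (c t) ^ 2 * ∑ i ∈ s, ‖D t (e i)‖ ^ 2 := by
        rw [Finset.mul_sum]
        exact Finset.sum_congr rfl fun i _ => by ring
      rw [h4]
      have h5 : (c t) ^ 2 * (((c t)⁻¹) ^ 2 * (((c t)⁻¹) ^ 2 * K)) = ((c t)⁻¹) ^ 2 * K := by
        field_simp
      calc (c t) ^ 2 * ∑ i ∈ s, ‖D t (e i)‖ ^ 2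
          ≤ (c t) ^ 2 * (((c t)⁻¹) ^ 2 * (((c t)⁻¹) ^ 2 * K)) :=
            mul_le_mul_of_nonneg_left h3 (by positivity)
        _ = ((c t)⁻¹) ^ 2 * K := h5
    calc ∑ i ∈ s, ‖(opLog (γ • (1 : H →L[ℝ] H) + A) - opLog (γ • (1 : H →L[ℝ] H) + B)) (e i)‖ ^ 2
        = ∑ i ∈ s, ‖∫ t in Set.Ioc (0:ℝ) 1, D t (e i)‖ ^ 2 :=
          Finset.sum_congr rfl fun i _ => by rw [hgi i]
      _ ≤ ∑ i ∈ s, (1/γ) * ∫ t in Set.Ioc (0:ℝ) 1, (c t * ‖D t (e i)‖) ^ 2 :=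
          Finset.sum_le_sum fun i _ => hHolder i
      _ = (1/γ) * ∑ i ∈ s, ∫ t in Set.Ioc (0:ℝ) 1, (c t * ‖D t (e i)‖) ^ 2 := by
          rw [Finset.mul_sum]
      _ = (1/γ) * ∫ t in Set.Ioc (0:ℝ) 1, ∑ i ∈ s, (c t * ‖D t (e i)‖) ^ 2 := by
          rw [integral_finset_sum s (fun i _ => hg2int i)]
      _ ≤ (1/γ) * ∫ t in Set.Ioc (0:ℝ) 1, ((c t)⁻¹) ^ 2 * K := by
          refine mul_le_mul_of_nonneg_left ?_ (by positivity)
          refine setIntegral_mono_on (integrable_finset_sum s (fun i _ => hg2int i))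
            (hf2int.mul_const K) measurableSet_Ioc hpoint
      _ = (1/γ) * ((1/γ) * K) := by
          rw [integral_mul_const, hI1]
      _ = (1/γ)^2 * K := by ring
  have hSumm : Summable fun i =>
      ‖(opLog (γ • (1 : H →L[ℝ] H) + A) - opLog (γ • (1 : H →L[ℝ] H) + B)) (e i)‖ ^ 2 :=
    summable_of_sum_le (fun i => sq_nonneg _) hps
  refine ⟨hSumm, ?_⟩
  have htsum : ∑' i,
      ‖(opLog (γ • (1 : H →L[ℝ] H) + A) - opLog (γ • (1 : H →L[ℝ] H) + B)) (e i)‖ ^ 2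
        ≤ (1/γ)^2 * K := Summable.tsum_le_of_sum_le hSumm hps
  show Real.sqrt _ ≤ (1/γ) * Real.sqrt _
  calc Real.sqrt (∑' i,
        ‖(opLog (γ • (1 : H →L[ℝ] H) + A) - opLog (γ • (1 : H →L[ℝ] H) + B)) (e i)‖ ^ 2)
      ≤ Real.sqrt ((1/γ)^2 * K) := Real.sqrt_le_sqrt htsum
    _ = (1/γ) * Real.sqrt K := by
        rw [Real.sqrt_mul (sq_nonneg _), Real.sqrt_sq (by positivity)]
end
end

section
/- Let H be a real separable Hilbert space and γ > 0 fixed. Let A and A_n (n ∈ ℕ) be in Sym(H) ∩ HS(H) with γI + A and γI + A_n positive definite for all n, and suppose lim_{n→∞} ‖A_n − A‖ = 0 in the operator norm. Let M_A > 0 be such that ⟨x, (γI + A)x⟩ ≥ M_A‖x‖² for all x ∈ H. Then for every ε with 0 < ε < M_A there exists N(ε) ∈ ℕ such that ‖A_n − A‖ < ε for all n ≥ N(ε), and for all n ≥ N(ε): ‖log(γI + A_n) − log(γI + A)‖_HS ≤ (1/(M_A − ε))‖A_n − A‖_HS. In particular, if moreover lim_{n→∞} ‖A_n − A‖_HS =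 0, then lim_{n→∞} ‖log(γI + A_n) − log(γI + A)‖_HS = 0. -/
open scoped RealInnerProductSpace
open MeasureTheory Filter

noncomputable section

variable {H : Type*} [NormedAddCommGroup H] [InnerProductSpace ℝ H] [CompleteSpace H]

variable {E F : Type*} [NormedAddCommGroup E] [InnerProductSpace ℝ E]
  [NormedAddCommGroup F] [InnerProductSpace ℝ F]

/-- `T` is positive definite: `⟨x, Tx⟩ ≥ M‖x‖²` for some `M > 0`. -/
def PosDef (T : H →L[ℝ] H) : Prop :=
  ∃ M : ℝ, 0 < M ∧ ∀ x : H, M * ‖x‖ ^ 2 ≤ ⟪x, T x⟫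

set_option synthInstance.maxHeartbeats 400000
set_option maxHeartbeats 1000000

lemma coercive_isUnit (T : H →L[ℝ] H) (hT : IsSelfAdjoint T) {c : ℝ} (hc : 0 < c)
    (hco : ∀ x : H, c * ‖x‖ ^ 2 ≤ ⟪x, T x⟫) :
    IsUnit T ∧ ‖Ring.inverse T‖ ≤ 1 / c := by
  have hlow : ∀ x : H, c * ‖x‖ ≤ ‖T x‖ := by
    intro x
    rcases eq_or_ne x 0 with rfl | hx
    · simp
    · have hxn : 0 < ‖x‖ := norm_pos_iff.2 hx
      have h1 : c * ‖x‖ ^ 2 ≤ ‖x‖ * ‖T x‖ := (hco x).trans (real_inner_le_norm x (T x))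
      nlinarith
  have hanti : AntilipschitzWith (⟨c⁻¹, by positivity⟩ : NNReal) T := by
    apply ContinuousLinearMap.antilipschitz_of_bound
    intro x
    have := hlow x
    change ‖x‖ ≤ c⁻¹ * ‖T x‖
    calc ‖x‖ = c * ‖x‖ / c := by field_simp
      _ ≤ ‖T x‖ / c := by gcongr
      _ = c⁻¹ * ‖T x‖ := by ring
  have hker : LinearMap.ker (T : H →ₗ[ℝ] H) = ⊥ := by
    exact LinearMap.ker_eq_bot.2 hanti.injective
  have hclosed : IsClosed (Set.range T) := hanti.isClosed_range T.uniformContinuous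
  have hrange : LinearMap.range (T : H →ₗ[ℝ] H) = ⊤ := by
    have horth : (LinearMap.range (T : H →ₗ[ℝ] H))ᗮ = ⊥ := by
      rw [Submodule.eq_bot_iff]
      intro y hy
      have h0 : ⟪T y, y⟫ = 0 := hy (T y) (LinearMap.mem_range_self _ y)
      have h1 : ⟪y, T y⟫ = 0 := by rwa [real_inner_comm]
      have := hco y
      rw [h1] at this
      have : ‖y‖ ^ 2 ≤ 0 := by nlinarith
      have : ‖y‖ = 0 := by nlinarith [sq_nonneg ‖y‖, norm_nonneg y]
      exact norm_eq_zero.mp this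
    have := (LinearMap.range (T : H →ₗ[ℝ] H)).orthogonal_orthogonal_eq_closure
    rw [horth, Submodule.bot_orthogonal_eq_top] at this
    have hcl : (LinearMap.range (T : H →ₗ[ℝ] H)).topologicalClosure = LinearMap.range (T : H →ₗ[ℝ] H) := by
      apply SetLike.ext'
      exact hclosed.closure_eq
    rw [hcl] at this
    exact this.symm
  let eqv := ContinuousLinearEquiv.ofBijective T hker hrange
  have heq : (eqv : H →L[ℝ] H) = T := rfl
  have hunit : IsUnit T := by
    refine ⟨⟨T, (eqv.symm : H →L[ℝ] H), ?_, ?_⟩, rfl⟩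
    · ext x; simp [← heq]
    · ext x; simp [← heq]
  refine ⟨hunit, ?_⟩
  rw [← hunit.unit_spec, Ring.inverse_unit]
  apply ContinuousLinearMap.opNorm_le_bound _ (by positivity)
  intro y
  have hx : T ((↑hunit.unit⁻¹ : H →L[ℝ] H) y) = y := by
    have : (↑hunit.unit * ↑hunit.unit⁻¹ : H →L[ℝ] H) = 1 := by
      rw [Units.mul_inv]
    calc T ((↑hunit.unit⁻¹ : H →L[ℝ] H) y)
        = ((↑hunit.unit * ↑hunit.unit⁻¹ : H →L[ℝ] H)) y := by
          rw [ContinuousLinearMap.mul_apply, hunit.unit_spec]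
      _ = y := by rw [this]; rfl
  have := hlow ((↑hunit.unit⁻¹ : H →L[ℝ] H) y)
  rw [hx] at this
  rw [div_mul_eq_mul_div, le_div_iff₀ hc]
  linarith

lemma sq_expand {ι : Type*} (e : HilbertBasis ι ℝ H) (x : H) :
    ENNReal.ofReal (‖x‖ ^ 2) = ∑' j, ENNReal.ofReal (⟪e j, x⟫ ^ 2) := by
  have h := e.hasSum_inner_mul_inner x x
  have heq : (fun j => ⟪x, e j⟫ * ⟪e j, x⟫) = fun j => ⟪e j, x⟫ ^ 2 := by
    funext j; rw [real_inner_comm x (e j)]; ring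
  rw [heq] at h
  have hs : Summable fun j => ⟪e j, x⟫ ^ 2 := h.summable
  have hsum : ∑' j, ⟪e j, x⟫ ^ 2 = ‖x‖ ^ 2 := by
    rw [h.tsum_eq, real_inner_self_eq_norm_sq]
  rw [← hsum, ENNReal.ofReal_tsum_of_nonneg (fun j => sq_nonneg _) hs]

lemma tsum_sq_adjoint {ι : Type*} (e : HilbertBasis ι ℝ H) (T : H →L[ℝ] H) :
    ∑' i, ENNReal.ofReal (‖(ContinuousLinearMap.adjoint T) (e i)‖ ^ 2)
      = ∑' i, ENNReal.ofReal (‖T (e i)‖ ^ 2) := by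
  calc ∑' i, ENNReal.ofReal (‖(ContinuousLinearMap.adjoint T) (e i)‖ ^ 2)
      = ∑' i, ∑' j, ENNReal.ofReal (⟪e j, (ContinuousLinearMap.adjoint T) (e i)⟫ ^ 2) := by
        simp_rw [sq_expand e]
    _ = ∑' j, ∑' i, ENNReal.ofReal (⟪e j, (ContinuousLinearMap.adjoint T) (e i)⟫ ^ 2) :=
        ENNReal.tsum_comm
    _ = ∑' j, ∑' i, ENNReal.ofReal (⟪e i, T (e j)⟫ ^ 2) := by
        congr 1; funext j; congr 1; funext i
        congr 2
        rw [real_inner_comm, ContinuousLinearMap.adjoint_inner_left]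
    _ = ∑' j, ENNReal.ofReal (‖T (e j)‖ ^ 2) := by
        simp_rw [← sq_expand e]

lemma tsum_sq_comp_left {ι : Type*} (e : HilbertBasis ι ℝ H) (B T : H →L[ℝ] H) :
    ∑' i, ENNReal.ofReal (‖(B * T) (e i)‖ ^ 2)
      ≤ ENNReal.ofReal (‖B‖ ^ 2) * ∑' i, ENNReal.ofReal (‖T (e i)‖ ^ 2) := by
  rw [← ENNReal.tsum_mul_left]
  apply ENNReal.tsum_le_tsum
  intro i
  rw [← ENNReal.ofReal_mul (by positivity)]
  apply ENNReal.ofReal_le_ofReal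
  calc ‖(B * T) (e i)‖ ^ 2 = ‖B (T (e i))‖ ^ 2 := rfl
    _ ≤ (‖B‖ * ‖T (e i)‖) ^ 2 := by
        apply pow_le_pow_left₀ (norm_nonneg _) (B.le_opNorm _)
    _ = ‖B‖ ^ 2 * ‖T (e i)‖ ^ 2 := by ring

lemma tsum_sq_comp_right {ι : Type*} (e : HilbertBasis ι ℝ H) (T C : H →L[ℝ] H)
    (hT : IsSelfAdjoint T) :
    ∑' i, ENNReal.ofReal (‖(T * C) (e i)‖ ^ 2)
      ≤ ENNReal.ofReal (‖C‖ ^ 2) * ∑' i, ENNReal.ofReal (‖T (e i)‖ ^ 2) := by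
  have h1 := tsum_sq_adjoint e (T * C)
  have h2 : ContinuousLinearMap.adjoint (T * C)
      = ContinuousLinearMap.adjoint C * ContinuousLinearMap.adjoint T := by
    exact ContinuousLinearMap.adjoint_comp T C
  rw [← h1, h2]
  refine le_trans (tsum_sq_comp_left e _ _) ?_
  rw [ContinuousLinearMap.adjoint.norm_map C, hT.adjoint_eq]

-- relation between real summability and ENNReal tsum
lemma summable_iff_ennreal {ι : Type*} (f : ι → ℝ) (hf : ∀ i, 0 ≤ f i) :
    Summable f ↔ ∑' i, ENNReal.ofReal (f i) ≠ ⊤ := by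
  constructor
  · intro hs h
    rw [← ENNReal.ofReal_tsum_of_nonneg hf hs] at h
    exact ENNReal.ofReal_ne_top h
  · intro h
    lift f to ι → NNReal using hf with g hg
    rw [show (fun i => ENNReal.ofReal ((fun i => ((g i : ℝ))) i)) = fun i => (g i : ENNReal) by
      funext i; simp [ENNReal.ofReal_coe_nnreal]] at h
    rw [NNReal.summable_coe]
    exact ENNReal.tsum_coe_ne_top_iff_summable.mp h

lemma resolvent_diff {R : Type*} [Ring R] [Algebra ℝ R] (t : ℝ) (S S' : R) (u u' : Rˣ)
    (hu : (u : R) = 1 + t • S) (hu' : (u' : R) = 1 + t • S') :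
    S' * ↑u'⁻¹ - S * ↑u⁻¹ = ↑u⁻¹ * (S' - S) * ↑u'⁻¹ := by
  have cS : Commute S (u : R) := by
    rw [hu]
    simp only [Commute, SemiconjBy, mul_add, add_mul, mul_one, one_mul, mul_smul_comm,
      smul_mul_assoc]
  have cSinv : Commute S ((↑u⁻¹ : R)) := cS.units_inv_right
  have key : (u : R) * (S' * ↑u'⁻¹ - S * ↑u⁻¹) * ↑u' = S' - S := by
    have h1 : (u : R) * (S' * ↑u'⁻¹) * ↑u' = ↑u * S' := by
      rw [mul_assoc, mul_assoc, Units.inv_mul, mul_one]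
    have h2 : (u : R) * (S * ↑u⁻¹) * ↑u' = S * ↑u' := by
      rw [cSinv.eq, ← mul_assoc, Units.mul_inv, one_mul]
    rw [mul_sub, sub_mul, h1, h2, hu, hu']
    simp only [add_mul, mul_add, one_mul, mul_one, smul_mul_assoc, mul_smul_comm]
    abel
  calc S' * ↑u'⁻¹ - S * ↑u⁻¹
      = ↑u⁻¹ * ((u : R) * (S' * ↑u'⁻¹ - S * ↑u⁻¹) * ↑u') * ↑u'⁻¹ := by
        rw [← mul_assoc, ← mul_assoc, Units.inv_mul, one_mul, mul_assoc, Units.mul_inv, mul_one]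
    _ = ↑u⁻¹ * (S' - S) * ↑u'⁻¹ := by rw [key]

lemma pencil_coercive (T : H →L[ℝ] H) {m : ℝ} (hco : ∀ x : H, m * ‖x‖ ^ 2 ≤ ⟪x, T x⟫)
    {t : ℝ} (ht : t ∈ Set.Icc (0:ℝ) 1) (x : H) :
    (1 - t + t * m) * ‖x‖ ^ 2 ≤ ⟪x, (1 + t • (T - 1)) x⟫ := by
  have hax : (1 + t • (T - 1)) x = x + t • (T x - x) := by
    simp [ContinuousLinearMap.add_apply, ContinuousLinearMap.smul_apply,
      ContinuousLinearMap.sub_apply]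
  rw [hax, inner_add_right, real_inner_smul_right, inner_sub_right,
    real_inner_self_eq_norm_sq]
  have := hco x
  have ht0 := ht.1
  nlinarith [mul_le_mul_of_nonneg_left this ht0]

lemma pencil_selfAdjoint (T : H →L[ℝ] H) (hT : IsSelfAdjoint T) (t : ℝ) :
    IsSelfAdjoint (1 + t • (T - 1) : H →L[ℝ] H) :=
  by
  have h : star (1 + t • (T - 1) : H →L[ℝ] H) = 1 + t • (T - 1) := by
    rw [star_add, star_smul, star_sub, star_one, hT.star_eq, star_trivial]
  exact h

lemma contOn_pencil_inv (S : H →L[ℝ] H)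
    (hU : ∀ t ∈ Set.Icc (0:ℝ) 1, IsUnit (1 + t • S)) :
    ContinuousOn (fun t : ℝ => Ring.inverse (1 + t • S)) (Set.Icc 0 1) := by
  intro t ht
  have hcont : Continuous fun t : ℝ => (1 + t • S : H →L[ℝ] H) :=
    continuous_const.add (continuous_id.smul continuous_const)
  have hCA : ContinuousAt (Ring.inverse : (H →L[ℝ] H) → (H →L[ℝ] H)) (1 + t • S) := by
    have := NormedRing.inverse_continuousAt (hU t ht).unit
    rwa [(hU t ht).unit_spec] at this
  have h2 := ContinuousAt.comp (g := Ring.inverse)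
    (f := fun t : ℝ => (1 + t • S : H →L[ℝ] H)) hCA hcont.continuousAt
  exact h2.continuousWithinAt

lemma pencil_pos {m : ℝ} (hm : 0 < m) {t : ℝ} (ht : t ∈ Set.Icc (0:ℝ) 1) :
    0 < 1 - t + t * m := by
  rcases lt_or_ge t 1 with h | h
  · nlinarith [mul_nonneg ht.1 hm.le]
  · have : t = 1 := le_antisymm ht.2 h
    rw [this]; linarith
lemma int_inv_sq {m : ℝ} (hm : 0 < m) :
    ∫ t in (0:ℝ)..1, ((1 - t + t * m)⁻¹) ^ 2 = 1 / m := by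
  have huIcc : Set.uIcc (0:ℝ) 1 = Set.Icc 0 1 := Set.uIcc_of_le zero_le_one
  have hpos : ∀ t ∈ Set.uIcc (0:ℝ) 1, 0 < 1 - t + t * m := by
    rw [huIcc]; exact fun t ht => pencil_pos hm ht
  have hcont : ContinuousOn (fun t : ℝ => ((1 - t + t * m)⁻¹) ^ 2) (Set.uIcc 0 1) := by
    apply ContinuousOn.pow
    apply ContinuousOn.inv₀
    · fun_prop
    · exact fun t ht => (hpos t ht).ne'
  have hderiv : ∀ t ∈ Set.uIcc (0:ℝ) 1,
      HasDerivAt (fun t : ℝ => t * (1 - t + t * m)⁻¹) (((1 - t + t * m)⁻¹) ^ 2) t := by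
    intro t ht
    have hne := (hpos t ht).ne'
    have hd : HasDerivAt (fun t : ℝ => 1 - t + t * m) (-1 + m) t := by
      have h1 : HasDerivAt (fun t : ℝ => 1 - t) (-1) t := (hasDerivAt_id t).const_sub 1
      have h2 : HasDerivAt (fun t : ℝ => t * m) m t := by
        simpa using (hasDerivAt_id t).mul_const m
      exact h1.add h2
    have hinv := hd.inv hne
    have := (hasDerivAt_id t).mul hinv
    refine this.congr_deriv ?_
    simp only [Pi.inv_apply, id]
    field_simp
    ring
  rw [intervalIntegral.integral_eq_sub_of_hasDerivAt hderiv (hcont.intervalIntegrable)]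
  have h1 : (1:ℝ) - 1 + 1 * m = m := by ring
  rw [h1]
  norm_num

def psi {ι : Type*} (e : HilbertBasis ι ℝ H) (s : Finset ι) :
    (H →L[ℝ] H) →L[ℝ] PiLp 2 (fun _ : s => H) :=
  LinearMap.mkContinuous
    { toFun := fun T => WithLp.toLp 2 (fun i => T (e (i : ι)))
      map_add' := fun T T' => rfl
      map_smul' := fun c T => rfl }
    (Real.sqrt s.card)
    (by
      intro T
      rw [PiLp.norm_eq_of_L2]
      simp only [LinearMap.coe_mk, AddHom.coe_mk]
      have hb : ∑ i : s, ‖T (e (i : ι))‖ ^ 2 ≤ (s.card : ℝ) * ‖T‖ ^ 2 := by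
        calc ∑ i : s, ‖T (e (i : ι))‖ ^ 2 ≤ ∑ _i : s, ‖T‖ ^ 2 := by
              apply Finset.sum_le_sum
              intro i _
              have := T.le_opNorm (e (i : ι))
              have hnorm : ‖e (i : ι)‖ = 1 := e.orthonormal.1 _
              rw [hnorm, mul_one] at this
              exact pow_le_pow_left₀ (norm_nonneg _) this 2
          _ = (s.card : ℝ) * ‖T‖ ^ 2 := by
              rw [Finset.sum_const]
              simp [mul_comm]
      calc Real.sqrt (∑ i : s, ‖T (e (i : ι))‖ ^ 2)
          ≤ Real.sqrt ((s.card : ℝ) * ‖T‖ ^ 2) := Real.sqrt_le_sqrt hb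
        _ = Real.sqrt s.card * ‖T‖ := by
            rw [Real.sqrt_mul (by positivity), Real.sqrt_sq (norm_nonneg T)])

lemma psi_apply {ι : Type*} (e : HilbertBasis ι ℝ H) (s : Finset ι) (T : H →L[ℝ] H) (i : s) :
    psi e s T i = T (e (i : ι)) := rfl

lemma psi_norm_sq {ι : Type*} (e : HilbertBasis ι ℝ H) (s : Finset ι) (T : H →L[ℝ] H) :
    ‖psi e s T‖ ^ 2 = ∑ i ∈ s, ‖T (e i)‖ ^ 2 := by
  rw [PiLp.norm_sq_eq_of_L2]
  rw [← Finset.sum_coe_sort s (fun i => ‖T (e i)‖ ^ 2)]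
  rfl

instance piLpComplete {ι : Type*} (s : Finset ι) : CompleteSpace (PiLp 2 fun _ : s => H) :=
  inferInstance

lemma main_est {ι : Type*} (e : HilbertBasis ι ℝ H) (T T' : H →L[ℝ] H)
    (hTsa : IsSelfAdjoint T) (hT'sa : IsSelfAdjoint T')
    (hXsum : Summable fun i => ‖(T' - T) (e i)‖ ^ 2)
    {m m' : ℝ} (hm : 0 < m) (hm' : 0 < m') (hm'm : m' ≤ m)
    (hcoT : ∀ x : H, m * ‖x‖ ^ 2 ≤ ⟪x, T x⟫)
    (hcoT' : ∀ x : H, m' * ‖x‖ ^ 2 ≤ ⟪x, T' x⟫) :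
    (Summable fun i => ‖(opLog T' - opLog T) (e i)‖ ^ 2) ∧
    Real.sqrt (∑' i, ‖(opLog T' - opLog T) (e i)‖ ^ 2)
      ≤ (1 / m') * Real.sqrt (∑' i, ‖(T' - T) (e i)‖ ^ 2) := by
  have hIccuIcc : Set.uIcc (0:ℝ) 1 = Set.Icc 0 1 := Set.uIcc_of_le zero_le_one
  set S := T - 1 with hS
  set S' := T' - 1 with hS'
  set X := T' - T with hX
  have hXsa : IsSelfAdjoint X := hT'sa.sub hTsa
  have hXSS : X = S' - S := by rw [hS, hS', hX]; abel
  -- units and norm bounds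
  have hUB : ∀ t ∈ Set.Icc (0:ℝ) 1,
      IsUnit (1 + t • S) ∧ ‖Ring.inverse (1 + t • S)‖ ≤ 1 / (1 - t + t * m) := fun t ht =>
    coercive_isUnit _ (pencil_selfAdjoint T hTsa t) (pencil_pos hm ht)
      (pencil_coercive T hcoT ht)
  have hUB' : ∀ t ∈ Set.Icc (0:ℝ) 1,
      IsUnit (1 + t • S') ∧ ‖Ring.inverse (1 + t • S')‖ ≤ 1 / (1 - t + t * m') := fun t ht =>
    coercive_isUnit _ (pencil_selfAdjoint T' hT'sa t) (pencil_pos hm' ht)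
      (pencil_coercive T' hcoT' ht)
  -- integrands
  set f : ℝ → (H →L[ℝ] H) := fun t => S * Ring.inverse (1 + t • S) with hf
  set f' : ℝ → (H →L[ℝ] H) := fun t => S' * Ring.inverse (1 + t • S') with hf'
  set g : ℝ → (H →L[ℝ] H) :=
    fun t => Ring.inverse (1 + t • S) * X * Ring.inverse (1 + t • S') with hg
  have hcontinv : ContinuousOn (fun t : ℝ => Ring.inverse (1 + t • S)) (Set.Icc 0 1) :=
    contOn_pencil_inv S (fun t ht => (hUB t ht).1)
  have hcontinv' : ContinuousOn (fun t : ℝ => Ring.inverse (1 + t • S')) (Set.Icc 0 1) :=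
    contOn_pencil_inv S' (fun t ht => (hUB' t ht).1)
  have hcontf : ContinuousOn f (Set.Icc 0 1) := continuousOn_const.mul hcontinv
  have hcontf' : ContinuousOn f' (Set.Icc 0 1) := continuousOn_const.mul hcontinv'
  have hcontg : ContinuousOn g (Set.Icc 0 1) :=
    (hcontinv.mul continuousOn_const).mul hcontinv'
  have hIf : IntervalIntegrable f volume 0 1 := by
    apply ContinuousOn.intervalIntegrable; rwa [hIccuIcc]
  have hIf' : IntervalIntegrable f' volume 0 1 := by
    apply ContinuousOn.intervalIntegrable; rwa [hIccuIcc]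
  have hIg : IntervalIntegrable g volume 0 1 := by
    apply ContinuousOn.intervalIntegrable; rwa [hIccuIcc]
  -- the difference as an integral
  have hdiff : opLog T' - opLog T = ∫ t in (0:ℝ)..1, g t := by
    have h1 : opLog T' - opLog T = ∫ t in (0:ℝ)..1, (f' t - f t) := by
      rw [opLog, opLog, intervalIntegral.integral_sub hIf' hIf]
    rw [h1]
    apply intervalIntegral.integral_congr
    intro t ht
    rw [hIccuIcc] at ht
    obtain ⟨u, huspec⟩ := (hUB t ht).1
    obtain ⟨u', hu'spec⟩ := (hUB' t ht).1
    have e1 : Ring.inverse (1 + t • S) = ↑u⁻¹ := by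
      rw [← huspec, Ring.inverse_unit]
    have e2 : Ring.inverse (1 + t • S') = ↑u'⁻¹ := by
      rw [← hu'spec, Ring.inverse_unit]
    show f' t - f t = g t
    rw [hf, hf', hg]
    simp only
    rw [e1, e2, hXSS]
    exact resolvent_diff t S S' u u' huspec hu'spec
  -- key finset bound
  set K := Real.sqrt (∑' i, ‖X (e i)‖ ^ 2) with hK
  have hK0 : 0 ≤ K := Real.sqrt_nonneg _
  have htsumX : ∑' i, ENNReal.ofReal (‖X (e i)‖ ^ 2) = ENNReal.ofReal (K ^ 2) := by
    rw [hK, Real.sq_sqrt (tsum_nonneg fun i => sq_nonneg _),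
      ENNReal.ofReal_tsum_of_nonneg (fun i => sq_nonneg _) hXsum]
  have key : ∀ s : Finset ι,
      ∑ i ∈ s, ‖(opLog T' - opLog T) (e i)‖ ^ 2 ≤ ((1 / m') * K) ^ 2 := by
    intro s
    have h1 : ∑ i ∈ s, ‖(opLog T' - opLog T) (e i)‖ ^ 2
        = ‖psi e s (opLog T' - opLog T)‖ ^ 2 := (psi_norm_sq e s _).symm
    have h2 : psi e s (opLog T' - opLog T) = ∫ t in (0:ℝ)..1, psi e s (g t) := by
      rw [hdiff]
      exact (ContinuousLinearMap.intervalIntegral_comp_comm (psi e s) hIg).symm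
    -- pointwise bound
    have hpt : ∀ t ∈ Set.Icc (0:ℝ) 1,
        ‖psi e s (g t)‖ ≤ ((1 - t + t * m')⁻¹) ^ 2 * K := by
      intro t ht
      set C := Ring.inverse (1 + t • S) with hC
      set D := Ring.inverse (1 + t • S') with hD
      have hposm := pencil_pos hm ht
      have hposm' := pencil_pos hm' ht
      have hCle : ‖C‖ ≤ (1 - t + t * m')⁻¹ := by
        refine le_trans (hUB t ht).2 ?_
        rw [one_div]
        apply inv_anti₀ hposm'
        nlinarith [ht.1]
      have hDle : ‖D‖ ≤ (1 - t + t * m')⁻¹ := by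
        refine le_trans (hUB' t ht).2 ?_
        rw [one_div]
      -- squares in ENNReal
      have hsq : ∑ i ∈ s, ‖(g t) (e i)‖ ^ 2 ≤ ‖C‖ ^ 2 * (‖D‖ ^ 2 * K ^ 2) := by
        have e0 : g t = C * (X * D) := by rw [hg]; simp only [← hC, ← hD]; rw [mul_assoc]
        have c1 : ENNReal.ofReal (∑ i ∈ s, ‖(g t) (e i)‖ ^ 2)
            = ∑ i ∈ s, ENNReal.ofReal (‖(g t) (e i)‖ ^ 2) :=
          ENNReal.ofReal_sum_of_nonneg (fun i _ => sq_nonneg _)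
        have c2 : (∑ i ∈ s, ENNReal.ofReal (‖(g t) (e i)‖ ^ 2))
            ≤ ∑' i, ENNReal.ofReal (‖(g t) (e i)‖ ^ 2) := ENNReal.sum_le_tsum s
        have c3 : ∑' i, ENNReal.ofReal (‖(g t) (e i)‖ ^ 2)
            ≤ ENNReal.ofReal (‖C‖ ^ 2) * (ENNReal.ofReal (‖D‖ ^ 2) * ENNReal.ofReal (K ^ 2)) := by
          rw [e0]
          refine le_trans (tsum_sq_comp_left e C (X * D)) ?_
          apply mul_le_mul_right
          refine le_trans (tsum_sq_comp_right e X D hXsa) ?_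
          rw [htsumX]
        have c4 : ENNReal.ofReal (∑ i ∈ s, ‖(g t) (e i)‖ ^ 2)
            ≤ ENNReal.ofReal (‖C‖ ^ 2 * (‖D‖ ^ 2 * K ^ 2)) := by
          rw [c1, ENNReal.ofReal_mul (by positivity), ENNReal.ofReal_mul (by positivity)]
          exact le_trans c2 c3
        exact (ENNReal.ofReal_le_ofReal_iff (by positivity)).mp c4
      have hpsisq : ‖psi e s (g t)‖ ^ 2 ≤ (((1 - t + t * m')⁻¹) ^ 2 * K) ^ 2 := by
        rw [psi_norm_sq]
        refine le_trans hsq ?_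
        have hb : (0:ℝ) ≤ (1 - t + t * m')⁻¹ := by positivity
        calc ‖C‖ ^ 2 * (‖D‖ ^ 2 * K ^ 2)
            ≤ ((1 - t + t * m')⁻¹) ^ 2 * (((1 - t + t * m')⁻¹) ^ 2 * K ^ 2) := by
              apply mul_le_mul
              · exact pow_le_pow_left₀ (norm_nonneg _) hCle 2
              · apply mul_le_mul_of_nonneg_right _ (sq_nonneg K)
                exact pow_le_pow_left₀ (norm_nonneg _) hDle 2
              · positivity
              · positivity
          _ = (((1 - t + t * m')⁻¹) ^ 2 * K) ^ 2 := by ring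
      calc ‖psi e s (g t)‖ = Real.sqrt (‖psi e s (g t)‖ ^ 2) :=
            (Real.sqrt_sq (norm_nonneg _)).symm
        _ ≤ Real.sqrt ((((1 - t + t * m')⁻¹) ^ 2 * K) ^ 2) := Real.sqrt_le_sqrt hpsisq
        _ = ((1 - t + t * m')⁻¹) ^ 2 * K := Real.sqrt_sq (by positivity)
    -- integral bound
    have hab : (0:ℝ) ≤ 1 := zero_le_one
    have hcont_pg : ContinuousOn (fun t => ‖psi e s (g t)‖) (Set.Icc 0 1) :=
      ((psi e s).continuous.comp_continuousOn hcontg).norm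
    have hcont_rhs : ContinuousOn (fun t : ℝ => ((1 - t + t * m')⁻¹) ^ 2 * K) (Set.Icc 0 1) := by
      apply ContinuousOn.mul _ continuousOn_const
      apply ContinuousOn.pow
      apply ContinuousOn.inv₀
      · fun_prop
      · exact fun t ht => (pencil_pos hm' ht).ne'
    have hI_pg : IntervalIntegrable (fun t => ‖psi e s (g t)‖) volume 0 1 := by
      apply ContinuousOn.intervalIntegrable; rwa [hIccuIcc]
    have hI_rhs : IntervalIntegrable (fun t : ℝ => ((1 - t + t * m')⁻¹) ^ 2 * K) volume 0 1 := by
      apply ContinuousOn.intervalIntegrable; rwa [hIccuIcc]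
    have h3 : ‖∫ t in (0:ℝ)..1, psi e s (g t)‖ ≤ (1 / m') * K := by
      calc ‖∫ t in (0:ℝ)..1, psi e s (g t)‖
          ≤ ∫ t in (0:ℝ)..1, ‖psi e s (g t)‖ :=
            intervalIntegral.norm_integral_le_integral_norm hab
        _ ≤ ∫ t in (0:ℝ)..1, ((1 - t + t * m')⁻¹) ^ 2 * K := by
            apply intervalIntegral.integral_mono_on hab hI_pg hI_rhs
            exact hpt
        _ = (∫ t in (0:ℝ)..1, ((1 - t + t * m')⁻¹) ^ 2) * K := by
            rw [← intervalIntegral.integral_mul_const]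
        _ = (1 / m') * K := by rw [int_inv_sq hm']
    rw [h1, h2]
    exact pow_le_pow_left₀ (norm_nonneg _) h3 2
  have hsumm : Summable fun i => ‖(opLog T' - opLog T) (e i)‖ ^ 2 :=
    summable_of_sum_le (fun i => sq_nonneg _) key
  refine ⟨hsumm, ?_⟩
  have htsum : ∑' i, ‖(opLog T' - opLog T) (e i)‖ ^ 2 ≤ ((1 / m') * K) ^ 2 :=
    Summable.tsum_le_of_sum_le hsumm key
  calc Real.sqrt (∑' i, ‖(opLog T' - opLog T) (e i)‖ ^ 2)
      ≤ Real.sqrt (((1 / m') * K) ^ 2) := Real.sqrt_le_sqrt htsum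
    _ = (1 / m') * K := Real.sqrt_sq (by positivity)

/-- Convergence in the Log-Hilbert–Schmidt distance from operator-norm
convergence. -/
theorem statement2 {ι : Type*} [Countable ι] (e : HilbertBasis ι ℝ H)
    (γ : ℝ) (hγ : 0 < γ) (A : H →L[ℝ] H) (As : ℕ → H →L[ℝ] H)
    (hAsa : IsSelfAdjoint A) (hAHS : IsHS e A)
    (hAssa : ∀ n, IsSelfAdjoint (As n)) (hAsHS : ∀ n, IsHS e (As n))
    (hpdA : PosDef (γ • (1 : H →L[ℝ] H) + A))
    (hpdAs : ∀ n, PosDef (γ • (1 : H →L[ℝ] H) + As n))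
    (hconv : Tendsto (fun n => ‖As n - A‖) atTop (nhds 0))
    (M : ℝ) (hM : 0 < M)
    (hMA : ∀ x : H, M * ‖x‖ ^ 2 ≤ ⟪x, (γ • (1 : H →L[ℝ] H) + A) x⟫) :
    (∀ ε : ℝ, 0 < ε → ε < M → ∃ N : ℕ, ∀ n ≥ N,
      ‖As n - A‖ < ε ∧
      IsHS e (opLog (γ • (1 : H →L[ℝ] H) + As n) - opLog (γ • (1 : H →L[ℝ] H) + A)) ∧
      hsNorm e (opLog (γ • (1 : H →L[ℝ] H) + As n) - opLog (γ • (1 : H →L[ℝ] H) + A)) ≤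
        (1 / (M - ε)) * hsNorm e (As n - A)) ∧
    (Tendsto (fun n => hsNorm e (As n - A)) atTop (nhds 0) →
      Tendsto (fun n =>
          hsNorm e (opLog (γ • (1 : H →L[ℝ] H) + As n) - opLog (γ • (1 : H →L[ℝ] H) + A)))
        atTop (nhds 0)) := by
  -- auxiliary setup
  set T : H →L[ℝ] H := γ • (1 : H →L[ℝ] H) + A with hT
  have hstar : ∀ (B : H →L[ℝ] H), IsSelfAdjoint B →
      IsSelfAdjoint (γ • (1 : H →L[ℝ] H) + B) := by
    intro B hB
    have h : star (γ • (1 : H →L[ℝ] H) + B) = γ • (1 : H →L[ℝ] H) + B := by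
      rw [star_add, star_smul, star_one, star_trivial, hB.star_eq]
    exact h
  have hTsa : IsSelfAdjoint T := hstar A hAsa
  have hTnsa : ∀ n, IsSelfAdjoint (γ • (1 : H →L[ℝ] H) + As n) := fun n => hstar _ (hAssa n)
  have hdiffop : ∀ n, (γ • (1 : H →L[ℝ] H) + As n) - T = As n - A := by
    intro n; rw [hT]; abel
  have hXsum : ∀ n, Summable fun i => ‖(As n - A) (e i)‖ ^ 2 := by
    intro n
    have h1 : ∀ i, ‖(As n - A) (e i)‖ ^ 2 ≤ 2 * ‖(As n) (e i)‖ ^ 2 + 2 * ‖A (e i)‖ ^ 2 := by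
      intro i
      have h2 : ‖(As n - A) (e i)‖ ≤ ‖(As n) (e i)‖ + ‖A (e i)‖ := by
        rw [ContinuousLinearMap.sub_apply]
        exact norm_sub_le _ _
      nlinarith [h2, sq_nonneg (‖(As n) (e i)‖ - ‖A (e i)‖), norm_nonneg ((As n - A) (e i)),
        norm_nonneg ((As n) (e i)), norm_nonneg (A (e i))]
    apply Summable.of_nonneg_of_le (fun i => sq_nonneg _) h1
    exact ((hAsHS n).mul_left 2).add (hAHS.mul_left 2)
  have hcoTn : ∀ n : ℕ, ∀ ε : ℝ, ‖As n - A‖ < ε →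
      ∀ x : H, (M - ε) * ‖x‖ ^ 2 ≤ ⟪x, (γ • (1 : H →L[ℝ] H) + As n) x⟫ := by
    intro n ε hlt x
    have hx1 : (γ • (1 : H →L[ℝ] H) + As n) x = T x + (As n - A) x := by
      rw [hT]
      simp only [ContinuousLinearMap.add_apply, ContinuousLinearMap.sub_apply]
      abel
    rw [hx1, inner_add_right]
    have h2 : |⟪x, (As n - A) x⟫| ≤ ‖As n - A‖ * ‖x‖ ^ 2 := by
      calc |⟪x, (As n - A) x⟫| ≤ ‖x‖ * ‖(As n - A) x‖ := abs_real_inner_le_norm _ _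
        _ ≤ ‖x‖ * (‖As n - A‖ * ‖x‖) := by
            apply mul_le_mul_of_nonneg_left ((As n - A).le_opNorm x) (norm_nonneg x)
        _ = ‖As n - A‖ * ‖x‖ ^ 2 := by ring
    have h3 := hMA x
    have h4 := abs_le.mp h2
    nlinarith [sq_nonneg ‖x‖]
  have hpart1 : ∀ ε : ℝ, 0 < ε → ε < M → ∃ N : ℕ, ∀ n ≥ N,
      ‖As n - A‖ < ε ∧
      IsHS e (opLog (γ • (1 : H →L[ℝ] H) + As n) - opLog (γ • (1 : H →L[ℝ] H) + A)) ∧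
      hsNorm e (opLog (γ • (1 : H →L[ℝ] H) + As n) - opLog (γ • (1 : H →L[ℝ] H) + A)) ≤
        (1 / (M - ε)) * hsNorm e (As n - A) := by
    intro ε hε hεM
    have hev : ∀ᶠ n in atTop, ‖As n - A‖ < ε := hconv.eventually_lt_const hε
    obtain ⟨N, hN⟩ := Filter.eventually_atTop.mp hev
    refine ⟨N, fun n hn => ?_⟩
    have hlt := hN n hn
    have hXsum' : Summable fun i => ‖((γ • (1 : H →L[ℝ] H) + As n) - T) (e i)‖ ^ 2 := by
      simp only [hdiffop n]; exact hXsum n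
    have hmain := main_est e T (γ • (1 : H →L[ℝ] H) + As n) hTsa (hTnsa n) hXsum'
      hM (by linarith : (0:ℝ) < M - ε) (by linarith : M - ε ≤ M) hMA (hcoTn n ε hlt)
    simp only [hdiffop n] at hmain
    refine ⟨hlt, hmain.1, ?_⟩
    exact hmain.2
  refine ⟨hpart1, ?_⟩
  intro hHS
  obtain ⟨N, hN⟩ := hpart1 (M / 2) (by linarith) (by linarith)
  have hup : ∀ᶠ n in atTop,
      hsNorm e (opLog (γ • (1 : H →L[ℝ] H) + As n) - opLog (γ • (1 : H →L[ℝ] H) + A)) ≤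
        (1 / (M - M / 2)) * hsNorm e (As n - A) :=
    Filter.eventually_atTop.mpr ⟨N, fun n hn => (hN n hn).2.2⟩
  have hlow : ∀ᶠ n in atTop, (0:ℝ) ≤
      hsNorm e (opLog (γ • (1 : H →L[ℝ] H) + As n) - opLog (γ • (1 : H →L[ℝ] H) + A)) :=
    Filter.Eventually.of_forall (fun n => Real.sqrt_nonneg _)
  have htend : Tendsto (fun n => (1 / (M - M / 2)) * hsNorm e (As n - A)) atTop (nhds 0) := by
    have := hHS.const_mul (1 / (M - M / 2))
    simpa using this
  exact tendsto_of_tendsto_of_tendsto_of_le_of_le' tendsto_const_nhds htend hlow hup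
end
end

section
/- Let H be a real separable Hilbert space and let A be a compact self-adjoint operator on H such that I + A is positive definite. Then for every t ∈ [0,1] the operator I + tA is invertible in L(H), the map t ↦ A(I + tA)^{-1} is continuous on [0,1], and the logarithm of I + A defined by the continuous functional (spectral) calculus satisfies log(I + A) = ∫₀¹ A (I + tA)^{-1} dt (a Bochner integral in L(H)). -/
open scoped RealInnerProductSpace
open MeasureTheory Filter

noncomputable section

variable {H : Type*} [NormedAddCommGroup H] [InnerProductSpace ℝ H] [CompleteSpace H]

variable {E F : Type*} [NormedAddCommGroup E] [InnerProductSpace ℝ E]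
  [NormedAddCommGroup F] [InnerProductSpace ℝ F]

/-- For a compact self-adjoint `A` with `I + A` positive definite: `I + tA` is
invertible for every `t ∈ [0,1]`, the map `t ↦ A(I + tA)⁻¹` is continuous on `[0,1]`, and the
Bochner integral `∫₀¹ A(I + tA)⁻¹ dt` equals the spectral-calculus logarithm of `I + A`
(characterized, for compact self-adjoint `A`, as the self-adjoint operator acting as
multiplication by `log(1 + μ)` on each eigenvector of `A` of eigenvalue `μ`). -/
theorem statement11 (A : H →L[ℝ] H)
    (hAc : IsCompactOperator (⇑A)) (hAsa : IsSelfAdjoint A)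
    (hpd : ∃ M : ℝ, 0 < M ∧ ∀ x : H, M * ‖x‖ ^ 2 ≤ ⟪x, ((1 : H →L[ℝ] H) + A) x⟫) :
    (∀ t ∈ Set.Icc (0:ℝ) 1, IsUnit ((1 : H →L[ℝ] H) + t • A)) ∧
    ContinuousOn (fun t : ℝ => A * Ring.inverse ((1 : H →L[ℝ] H) + t • A)) (Set.Icc 0 1) ∧
    (∫ t in (0:ℝ)..1, A * Ring.inverse ((1 : H →L[ℝ] H) + t • A)) = opLog (1 + A) ∧
    IsSelfAdjoint (∫ t in (0:ℝ)..1, A * Ring.inverse ((1 : H →L[ℝ] H) + t • A)) ∧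
    (∀ (μ : ℝ) (v : H), A v = μ • v →
      (∫ t in (0:ℝ)..1, A * Ring.inverse ((1 : H →L[ℝ] H) + t • A)) v =
        Real.log (1 + μ) • v) := by
  obtain ⟨M, hM, hMx⟩ := hpd
  -- Part 1: invertibility
  have hunit : ∀ t ∈ Set.Icc (0:ℝ) 1, IsUnit ((1 : H →L[ℝ] H) + t • A) := by
    intro t ht
    have hc : ∀ x : H, ((1-t) + t*M) * ‖x‖^2 ≤ ⟪x, ((1 : H →L[ℝ] H) + t • A) x⟫ := by
      intro x
      have h1 : ((1 : H →L[ℝ] H) + t • A) x = (1-t) • x + t • (((1 : H →L[ℝ] H) + A) x) := by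
        simp [ContinuousLinearMap.add_apply, smul_smul]
        module
      rw [h1, inner_add_right, real_inner_smul_right, real_inner_smul_right,
        real_inner_self_eq_norm_sq]
      have := hMx x
      nlinarith [ht.1, ht.2, sq_nonneg ‖x‖]
    have hcpos : 0 < (1-t) + t*M := by
      nlinarith [ht.1, ht.2, mul_nonneg ht.1 hM.le, mul_nonneg (sub_nonneg.mpr ht.2) hM.le]
    set B : H →L[ℝ] H →L[ℝ] ℝ := (innerSL ℝ).comp ((1 : H →L[ℝ] H) + t • A) with hB
    have hBco : IsCoercive B := by
      refine ⟨(1-t)+t*M, hcpos, fun u => ?_⟩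
      have h2 : B u u = ⟪u, ((1 : H →L[ℝ] H) + t • A) u⟫ := by
        rw [real_inner_comm]; rfl
      rw [h2]
      calc ((1-t)+t*M) * ‖u‖ * ‖u‖ = ((1-t)+t*M) * ‖u‖^2 := by ring
        _ ≤ _ := hc u
    have hEq : ∀ v, ((1 : H →L[ℝ] H) + t • A) v = hBco.continuousLinearEquivOfBilin v :=
      fun v => hBco.unique_continuousLinearEquivOfBilin (fun w => rfl)
    rw [ContinuousLinearMap.isUnit_iff_bijective]
    have : ⇑((1 : H →L[ℝ] H) + t • A) = ⇑hBco.continuousLinearEquivOfBilin := funext hEq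
    rw [this]
    exact hBco.continuousLinearEquivOfBilin.bijective
  -- Part 2: continuity
  have hcont : ContinuousOn (fun t : ℝ => A * Ring.inverse ((1 : H →L[ℝ] H) + t • A))
      (Set.Icc 0 1) := by
    apply continuousOn_const.mul
    intro t ht
    have hg : Continuous fun s : ℝ => (1 : H →L[ℝ] H) + s • A :=
      continuous_const.add (continuous_id.smul continuous_const)
    have h1 := NormedRing.inverse_continuousAt (hunit t ht).unit
    rw [(hunit t ht).unit_spec] at h1
    exact ContinuousAt.comp_continuousWithinAt (g := Ring.inverse) h1 hg.continuousWithinAt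
  -- Integrability
  have hInt : IntervalIntegrable (fun t : ℝ => A * Ring.inverse ((1 : H →L[ℝ] H) + t • A))
      volume 0 1 := by
    apply ContinuousOn.intervalIntegrable
    rwa [Set.uIcc_of_le zero_le_one]
  -- Part 3
  have h3 : (∫ t in (0:ℝ)..1, A * Ring.inverse ((1 : H →L[ℝ] H) + t • A)) = opLog (1 + A) := by
    rw [opLog]
    simp only [add_sub_cancel_left]
  -- pointwise self-adjointness
  have hsa : ∀ t ∈ Set.Icc (0:ℝ) 1,
      star (A * Ring.inverse ((1 : H →L[ℝ] H) + t • A))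
        = A * Ring.inverse ((1 : H →L[ℝ] H) + t • A) := by
    intro t ht
    have hTsa : star ((1 : H →L[ℝ] H) + t • A) = (1 : H →L[ℝ] H) + t • A := by
      simp [star_add, star_smul, hAsa.star_eq]
    have hcomm : Commute A (Ring.inverse ((1 : H →L[ℝ] H) + t • A)) := by
      have h1 : Commute A ((1 : H →L[ℝ] H) + t • A) :=
        (Commute.one_right A).add_right (by
          unfold Commute SemiconjBy
          ext x
          simp [ContinuousLinearMap.mul_apply, ContinuousLinearMap.add_apply,
            ContinuousLinearMap.smul_apply, ContinuousLinearMap.map_smul])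
      rw [← (hunit t ht).unit_spec] at h1 ⊢
      rw [Ring.inverse_unit]
      exact h1.units_inv_right
    rw [star_mul, hAsa.star_eq, ← Ring.inverse_star, hTsa]
    exact hcomm.eq.symm
  -- Part 4
  have h4 : IsSelfAdjoint (∫ t in (0:ℝ)..1, A * Ring.inverse ((1 : H →L[ℝ] H) + t • A)) := by
    have hL := ((starL' ℝ : (H →L[ℝ] H) ≃L[ℝ] (H →L[ℝ] H)).toContinuousLinearMap
      |>.intervalIntegral_comp_comm hInt)
    rw [IsSelfAdjoint]
    calc star (∫ t in (0:ℝ)..1, A * Ring.inverse ((1 : H →L[ℝ] H) + t • A))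
        = ∫ t in (0:ℝ)..1, star (A * Ring.inverse ((1 : H →L[ℝ] H) + t • A)) := hL.symm
      _ = ∫ t in (0:ℝ)..1, A * Ring.inverse ((1 : H →L[ℝ] H) + t • A) := by
          apply intervalIntegral.integral_congr
          intro t ht
          rw [Set.uIcc_of_le zero_le_one] at ht
          exact hsa t ht
  -- Part 5
  have h5 : ∀ (μ : ℝ) (v : H), A v = μ • v →
      (∫ t in (0:ℝ)..1, A * Ring.inverse ((1 : H →L[ℝ] H) + t • A)) v
        = Real.log (1 + μ) • v := by
    intro μ v hv
    rcases eq_or_ne v 0 with rfl | hv0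
    · simp
    have hnorm : 0 < ‖v‖^2 := by have := norm_pos_iff.mpr hv0; positivity
    have h1μ : M ≤ 1 + μ := by
      have h := hMx v
      have heq : ⟪v, ((1 : H →L[ℝ] H) + A) v⟫ = (1+μ) * ‖v‖^2 := by
        rw [ContinuousLinearMap.add_apply, ContinuousLinearMap.one_apply, hv,
          inner_add_right, real_inner_smul_right, real_inner_self_eq_norm_sq]
        ring
      rw [heq] at h
      nlinarith
    have hpos : ∀ t ∈ Set.Icc (0:ℝ) 1, 0 < 1 + t * μ := by
      intro t ht
      nlinarith [ht.1, ht.2, hM, mul_nonneg ht.1 (sub_nonneg.mpr h1μ), mul_nonneg ht.1 hM.le,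
        mul_nonneg (sub_nonneg.mpr ht.2) hM.le]
    have hval : Set.EqOn (fun t : ℝ => (A * Ring.inverse ((1 : H →L[ℝ] H) + t • A)) v)
        (fun t : ℝ => (μ / (1 + t * μ)) • v) (Set.uIcc 0 1) := by
      intro t ht
      rw [Set.uIcc_of_le zero_le_one] at ht
      have hu := hunit t ht
      have htμ := hpos t ht
      have happ : ((1 : H →L[ℝ] H) + t • A) ((1 + t*μ)⁻¹ • v) = v := by
        have h2 : ((1 : H →L[ℝ] H) + t • A) v = (1 + t*μ) • v := by
          simp [ContinuousLinearMap.add_apply, hv, smul_smul]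
          module
        rw [ContinuousLinearMap.map_smul, h2, smul_smul, inv_mul_cancel₀ htμ.ne', one_smul]
      have hInv : Ring.inverse ((1 : H →L[ℝ] H) + t • A) v = (1 + t*μ)⁻¹ • v := by
        calc Ring.inverse ((1 : H →L[ℝ] H) + t • A) v
            = Ring.inverse ((1 : H →L[ℝ] H) + t • A)
                (((1 : H →L[ℝ] H) + t • A) ((1 + t*μ)⁻¹ • v)) := by rw [happ]
          _ = (Ring.inverse ((1 : H →L[ℝ] H) + t • A) * ((1 : H →L[ℝ] H) + t • A))
                ((1 + t*μ)⁻¹ • v) := rfl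
          _ = (1 + t*μ)⁻¹ • v := by rw [Ring.inverse_mul_cancel _ hu]; simp
      show (A * Ring.inverse ((1 : H →L[ℝ] H) + t • A)) v = (μ / (1 + t * μ)) • v
      rw [ContinuousLinearMap.mul_apply, hInv, ContinuousLinearMap.map_smul, hv, smul_smul,
        div_eq_mul_inv, mul_comm]
    rw [ContinuousLinearMap.intervalIntegral_apply hInt v,
      intervalIntegral.integral_congr hval, intervalIntegral.integral_smul_const]
    congr 1
    have hderiv : ∀ t ∈ Set.uIcc (0:ℝ) 1,
        HasDerivAt (fun s : ℝ => Real.log (1 + s * μ)) (μ / (1 + t * μ)) t := by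
      intro t ht
      rw [Set.uIcc_of_le zero_le_one] at ht
      have h1 : HasDerivAt (fun s : ℝ => 1 + s * μ) μ t := by
        simpa using ((hasDerivAt_id t).mul_const μ).const_add 1
      have h2 := (Real.hasDerivAt_log (hpos t ht).ne').comp t h1
      rw [div_eq_inv_mul]
      exact h2
    have hconts : IntervalIntegrable (fun t : ℝ => μ / (1 + t * μ)) volume 0 1 := by
      apply ContinuousOn.intervalIntegrable
      rw [Set.uIcc_of_le zero_le_one]
      exact continuousOn_const.div
        ((continuous_const.add (continuous_id.mul continuous_const)).continuousOn)
        (fun t ht => (hpos t ht).ne')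
    rw [intervalIntegral.integral_eq_sub_of_hasDerivAt hderiv hconts]
    simp
  exact ⟨hunit, hcont, h3, h4, h5⟩
end
end

section
/- Let H be a real separable Hilbert space. Let A, B ∈ HS(H) (not necessarily self-adjoint) be such that there exist M_A, M_B > 0 with ⟨x, (I + A)x⟩ ≥ M_A‖x‖² and ⟨x, (I + B)x⟩ ≥ M_B‖x‖² for all x ∈ H, so that I + tA and I + tB are invertible for all t ∈ [0,1]; define Log(I + A) := ∫₀¹ A (I + tA)^{-1} dt and Log(I + B) := ∫₀¹ B (I + tB)^{-1} dt (Bochner integrals in HS(H)). Then ‖Log(I + A)‖_HS ≤ ‖A‖_HS · sup_{t∈[0,1]} ‖(I + tA)^{-1}‖, and ‖Log(I + A) − Log(I + B)‖_HS ≤ ‖A − B‖_HS · sup_{t∈[0,1]} ‖(I + tA)^{-1}‖ · sup_{t∈[0,1]} ‖(I + tB)^{-1}‖. Moreover, if A and B are in Sym⁺(H) ∩ HS(H), then ‖Log(I + A)‖_HS ≤ ‖A‖_HS and ‖Log(I + A) − Log(I + B)‖_HS ≤ ‖A − B‖_HS. -/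
open scoped RealInnerProductSpace
open MeasureTheory Filter

noncomputable section

variable {H : Type*} [NormedAddCommGroup H] [InnerProductSpace ℝ H] [CompleteSpace H]

variable {E F : Type*} [NormedAddCommGroup E] [InnerProductSpace ℝ E]
  [NormedAddCommGroup F] [InnerProductSpace ℝ F]

open scoped ENNReal NNReal

namespace Statement12Aux

variable {ι : Type*} (e : HilbertBasis ι ℝ H)

/-- The Hilbert–Schmidt sum valued in `ℝ≥0∞`. -/
def sE (T : H →L[ℝ] H) : ℝ≥0∞ := ∑' i, ENNReal.ofReal (‖T (e i)‖ ^ 2)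

omit [CompleteSpace H] in
lemma parseval_hasSum (x : H) : HasSum (fun j => ⟪e j, x⟫ ^ 2) (‖x‖ ^ 2) := by
  have h := e.hasSum_inner_mul_inner x x
  have h2 : ∀ j, ⟪x, e j⟫ * ⟪e j, x⟫ = ⟪e j, x⟫ ^ 2 := by
    intro j; rw [real_inner_comm x (e j)]; ring
  simpa [h2, real_inner_self_eq_norm_sq] using h

omit [CompleteSpace H] in
lemma ofReal_norm_sq_eq (x : H) :
    ENNReal.ofReal (‖x‖ ^ 2) = ∑' j, ENNReal.ofReal (⟪e j, x⟫ ^ 2) := by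
  rw [← (parseval_hasSum e x).tsum_eq]
  exact ENNReal.ofReal_tsum_of_nonneg (fun _ => sq_nonneg _) (parseval_hasSum e x).summable

lemma sE_adjoint (T : H →L[ℝ] H) : sE e (ContinuousLinearMap.adjoint T) = sE e T := by
  unfold sE
  calc ∑' j, ENNReal.ofReal (‖ContinuousLinearMap.adjoint T (e j)‖ ^ 2)
      = ∑' j, ∑' i, ENNReal.ofReal (⟪e i, ContinuousLinearMap.adjoint T (e j)⟫ ^ 2) :=
        tsum_congr fun j => ofReal_norm_sq_eq e _
    _ = ∑' i, ∑' j, ENNReal.ofReal (⟪e i, ContinuousLinearMap.adjoint T (e j)⟫ ^ 2) :=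
        ENNReal.tsum_comm
    _ = ∑' i, ENNReal.ofReal (‖T (e i)‖ ^ 2) := by
        refine tsum_congr fun i => ?_
        rw [ofReal_norm_sq_eq e (T (e i))]
        refine tsum_congr fun j => ?_
        rw [ContinuousLinearMap.adjoint_inner_right, real_inner_comm]

omit [CompleteSpace H] in
lemma sE_comp_le_left (S T : H →L[ℝ] H) :
    sE e (S * T) ≤ ENNReal.ofReal (‖S‖ ^ 2) * sE e T := by
  unfold sE
  rw [← ENNReal.tsum_mul_left]
  refine ENNReal.tsum_le_tsum fun i => ?_
  rw [← ENNReal.ofReal_mul (sq_nonneg _)]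
  refine ENNReal.ofReal_le_ofReal ?_
  have h1 : ‖S (T (e i))‖ ≤ ‖S‖ * ‖T (e i)‖ := S.le_opNorm _
  have h2 : (S * T) (e i) = S (T (e i)) := rfl
  rw [h2]
  nlinarith [norm_nonneg (S (T (e i))), norm_nonneg S, norm_nonneg (T (e i))]

lemma sE_comp_le_right (T S : H →L[ℝ] H) :
    sE e (T * S) ≤ ENNReal.ofReal (‖S‖ ^ 2) * sE e T := by
  have h1 : ContinuousLinearMap.adjoint (T * S)
      = ContinuousLinearMap.adjoint S * ContinuousLinearMap.adjoint T :=
    ContinuousLinearMap.adjoint_comp T S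
  calc sE e (T * S) = sE e (ContinuousLinearMap.adjoint (T * S)) := (sE_adjoint e _).symm
    _ = sE e (ContinuousLinearMap.adjoint S * ContinuousLinearMap.adjoint T) := by rw [h1]
    _ ≤ ENNReal.ofReal (‖ContinuousLinearMap.adjoint S‖ ^ 2) *
          sE e (ContinuousLinearMap.adjoint T) := sE_comp_le_left e _ _
    _ = ENNReal.ofReal (‖S‖ ^ 2) * sE e T := by
        rw [sE_adjoint, (ContinuousLinearMap.adjoint : (H →L[ℝ] H) ≃ₗᵢ⋆[ℝ] _).norm_map S]

omit [CompleteSpace H] in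
lemma sE_eq_ofReal {T : H →L[ℝ] H} (hT : IsHS e T) :
    sE e T = ENNReal.ofReal (∑' i, ‖T (e i)‖ ^ 2) :=
  (ENNReal.ofReal_tsum_of_nonneg (fun _ => sq_nonneg _) hT).symm

omit [CompleteSpace H] in
lemma isHS_of_sE_ne_top {T : H →L[ℝ] H} (h : sE e T ≠ ⊤) : IsHS e T := by
  have hterm : ∀ i, ENNReal.ofReal (‖T (e i)‖ ^ 2) = ((‖T (e i)‖₊ ^ 2 : ℝ≥0) : ℝ≥0∞) := by
    intro i
    rw [ENNReal.ofReal_pow (norm_nonneg _), ofReal_norm, enorm_eq_nnnorm]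
    push_cast; ring
  rw [sE, funext hterm] at h
  have hsum : Summable fun i => (‖T (e i)‖₊ ^ 2 : ℝ≥0) :=
    ENNReal.tsum_coe_ne_top_iff_summable.mp h
  have := NNReal.summable_coe.mpr hsum
  simpa [NNReal.coe_pow, IsHS] using this

omit [CompleteSpace H] in
lemma tsum_sq_eq {T : H →L[ℝ] H} (hT : IsHS e T) :
    ∑' i, ‖T (e i)‖ ^ 2 = (sE e T).toReal := by
  rw [sE_eq_ofReal e hT, ENNReal.toReal_ofReal (tsum_nonneg fun _ => sq_nonneg _)]

lemma coercive_norm_le (T : H →L[ℝ] H) {c : ℝ} (hc : 0 < c)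
    (h : ∀ x, c * ‖x‖ ^ 2 ≤ ⟪x, T x⟫) (x : H) : c * ‖x‖ ≤ ‖T x‖ := by
  rcases eq_or_ne x 0 with rfl | hx
  · simp
  · have h1 : c * ‖x‖ ^ 2 ≤ ‖x‖ * ‖T x‖ := (h x).trans (real_inner_le_norm x (T x))
    have h2 : 0 < ‖x‖ := norm_pos_iff.2 hx
    nlinarith

lemma coercive_isUnit (T : H →L[ℝ] H) {c : ℝ} (hc : 0 < c)
    (h : ∀ x, c * ‖x‖ ^ 2 ≤ ⟪x, T x⟫) : IsUnit T := by
  refine ContinuousLinearMap.isUnit_of_forall_le_norm_inner_map T (c := c.toNNReal)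
    (Real.toNNReal_pos.mpr hc) fun x => ?_
  have h0 : 0 ≤ ⟪x, T x⟫ := le_trans (by positivity) (h x)
  rw [real_inner_comm, Real.norm_eq_abs, abs_of_nonneg h0]
  calc ‖x‖ ^ 2 * (c.toNNReal : ℝ) = c * ‖x‖ ^ 2 := by
        rw [Real.coe_toNNReal _ hc.le]; ring
    _ ≤ _ := h x

omit [CompleteSpace H] in
lemma inverse_apply_eq (T : H →L[ℝ] H) (hu : IsUnit T) (y : H) :
    T (Ring.inverse T y) = y := by
  have h := Ring.mul_inverse_cancel T hu
  calc T (Ring.inverse T y) = (T * Ring.inverse T) y := rfl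
    _ = y := by rw [h]; rfl

lemma coercive_inverse_bound (T : H →L[ℝ] H) {c : ℝ} (hc : 0 < c)
    (h : ∀ x, c * ‖x‖ ^ 2 ≤ ⟪x, T x⟫) : ‖Ring.inverse T‖ ≤ c⁻¹ := by
  refine ContinuousLinearMap.opNorm_le_bound _ (by positivity) fun y => ?_
  have hu := coercive_isUnit T hc h
  have h1 := coercive_norm_le T hc h (Ring.inverse T y)
  rw [inverse_apply_eq T hu y] at h1
  calc ‖Ring.inverse T y‖ = c⁻¹ * (c * ‖Ring.inverse T y‖) := by field_simp
    _ ≤ c⁻¹ * ‖y‖ := mul_le_mul_of_nonneg_left h1 (by positivity)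

lemma intervalIntegral_apply {g : ℝ → H →L[ℝ] H}
    (hg : IntervalIntegrable g MeasureTheory.volume 0 1) (x : H) :
    (∫ t in (0:ℝ)..1, g t) x = ∫ t in (0:ℝ)..1, g t x := by
  rw [intervalIntegral.integral_of_le zero_le_one, intervalIntegral.integral_of_le zero_le_one]
  exact ContinuousLinearMap.integral_apply hg.1 x

lemma sq_integral_le (f : ℝ → ℝ) (hf : ContinuousOn f (Set.Icc 0 1)) :
    (∫ t in (0:ℝ)..1, f t) ^ 2 ≤ ∫ t in (0:ℝ)..1, f t ^ 2 := by
  have huicc : Set.uIcc (0:ℝ) 1 = Set.Icc 0 1 := Set.uIcc_of_le zero_le_one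
  have hif : IntervalIntegrable f volume 0 1 := (huicc ▸ hf).intervalIntegrable
  have hif2 : IntervalIntegrable (fun t => f t ^ 2) volume 0 1 :=
    (huicc ▸ hf.pow 2).intervalIntegrable
  set m := ∫ t in (0:ℝ)..1, f t with hm
  have h0 : 0 ≤ ∫ t in (0:ℝ)..1, (f t - m) ^ 2 :=
    intervalIntegral.integral_nonneg zero_le_one (fun t _ => sq_nonneg _)
  have hrw : (fun t => (f t - m) ^ 2) = fun t => f t ^ 2 - (2 * m) * f t + m ^ 2 := by
    funext t; ring
  rw [hrw] at h0
  rw [intervalIntegral.integral_add ((hif2.sub (hif.const_mul (2 * m))))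
      intervalIntegrable_const,
    intervalIntegral.integral_sub hif2 (hif.const_mul (2 * m)),
    intervalIntegral.integral_const_mul, intervalIntegral.integral_const] at h0
  rw [← hm] at h0
  simp only [smul_eq_mul, sub_zero, one_mul] at h0
  nlinarith [h0]

omit [CompleteSpace H] [InnerProductSpace ℝ H] in
lemma comm_inverse {R : Type*} [Ring R] {a b : R} (hu : IsUnit b) (h : a * b = b * a) :
    a * Ring.inverse b = Ring.inverse b * a := by
  obtain ⟨u, rfl⟩ := hu
  rw [Ring.inverse_unit]
  exact ((Commute.units_inv_right h) : _)

omit [CompleteSpace H] [InnerProductSpace ℝ H] in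
lemma diff_identity {R : Type*} [Ring R] [Module ℝ R] [SMulCommClass ℝ R R]
    [IsScalarTower ℝ R R] (A B : R) (t : ℝ)
    (huA : IsUnit (1 + t • A)) (huB : IsUnit (1 + t • B)) :
    A * Ring.inverse (1 + t • A) - B * Ring.inverse (1 + t • B)
      = Ring.inverse (1 + t • A) * ((A - B) * Ring.inverse (1 + t • B)) := by
  set a := Ring.inverse (1 + t • A) with ha
  set b := Ring.inverse (1 + t • B) with hb
  have e1 : (1 + t • B) * b = 1 := Ring.mul_inverse_cancel _ huB
  have e2 : a * (1 + t • A) = 1 := Ring.inverse_mul_cancel _ huA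
  have cA : A * a = a * A := by
    apply comm_inverse huA
    simp [mul_add, add_mul, mul_smul_comm, smul_mul_assoc]
  have key : A * a - B * b = (A * a) * ((1 + t • B) * b) - (a * (1 + t • A)) * (B * b) := by
    rw [e1, e2, mul_one, one_mul]
  rw [key]
  have s1 : (A * a) * ((1 + t • B) * b) = a * (A * b) + t • (a * (A * (B * b))) := by
    rw [cA]
    simp only [mul_add, add_mul, mul_one, one_mul, mul_smul_comm, smul_mul_assoc, mul_assoc]
  have s2 : (a * (1 + t • A)) * (B * b) = a * (B * b) + t • (a * (A * (B * b))) := by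
    simp only [mul_add, add_mul, mul_one, one_mul, mul_smul_comm, smul_mul_assoc, mul_assoc]
  rw [s1, s2, sub_mul, mul_sub]
  abel

omit [CompleteSpace H] in
lemma uniform_coercive (A : H →L[ℝ] H) {M : ℝ} (hM : 0 < M)
    (h : ∀ x, M * ‖x‖ ^ 2 ≤ ⟪x, ((1 : H →L[ℝ] H) + A) x⟫) :
    ∀ t ∈ Set.Icc (0:ℝ) 1, ∀ x : H,
      min 1 M * ‖x‖ ^ 2 ≤ ⟪x, ((1 : H →L[ℝ] H) + t • A) x⟫ := by
  intro t ht x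
  have h1 : ((1 : H →L[ℝ] H) + t • A) x = x + t • A x := by
    simp [ContinuousLinearMap.add_apply]
  have hA : (M - 1) * ‖x‖ ^ 2 ≤ ⟪x, A x⟫ := by
    have h2 : ((1 : H →L[ℝ] H) + A) x = x + A x := by simp [ContinuousLinearMap.add_apply]
    have := h x
    rw [h2, inner_add_right, real_inner_self_eq_norm_sq] at this
    linarith
  rw [h1, inner_add_right, real_inner_smul_right, real_inner_self_eq_norm_sq]
  rcases le_or_gt 0 ⟪x, A x⟫ with hp | hp
  · have h3 : 0 ≤ t * ⟪x, A x⟫ := mul_nonneg ht.1 hp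
    nlinarith [mul_le_mul_of_nonneg_right (min_le_left 1 M) (sq_nonneg ‖x‖)]
  · have h3 : t * ⟪x, A x⟫ ≥ 1 * ⟪x, A x⟫ := by nlinarith [ht.2]
    nlinarith [mul_le_mul_of_nonneg_right (min_le_right 1 M) (sq_nonneg ‖x‖)]

lemma inverse_continuousOn (A : H →L[ℝ] H)
    (hu : ∀ t ∈ Set.Icc (0:ℝ) 1, IsUnit ((1 : H →L[ℝ] H) + t • A)) :
    ContinuousOn (fun t : ℝ => Ring.inverse ((1 : H →L[ℝ] H) + t • A)) (Set.Icc 0 1) := by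
  intro t ht
  apply ContinuousAt.continuousWithinAt
  have h1 : ContinuousAt (fun s : ℝ => (1 : H →L[ℝ] H) + s • A) t :=
    (continuous_const.add (continuous_id.smul continuous_const)).continuousAt
  have h2 := NormedRing.inverse_continuousAt (hu t ht).unit
  rw [IsUnit.unit_spec] at h2
  exact ContinuousAt.comp (g := Ring.inverse) h2 h1

end Statement12Aux

open Statement12Aux

set_option maxHeartbeats 2000000 in
set_option synthInstance.maxHeartbeats 1000000 in
/-- Hilbert–Schmidt estimates for the integral logarithm
`Log(I + A) = ∫₀¹ A(I + tA)⁻¹ dt` of (not necessarily self-adjoint) Hilbert–Schmidt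
perturbations of the identity. -/
theorem statement12 {ι : Type*} [Countable ι] (e : HilbertBasis ι ℝ H)
    (A B : H →L[ℝ] H) (hAHS : IsHS e A) (hBHS : IsHS e B)
    (MA MB : ℝ) (hMA0 : 0 < MA) (hMB0 : 0 < MB)
    (hMA : ∀ x : H, MA * ‖x‖ ^ 2 ≤ ⟪x, ((1 : H →L[ℝ] H) + A) x⟫)
    (hMB : ∀ x : H, MB * ‖x‖ ^ 2 ≤ ⟪x, ((1 : H →L[ℝ] H) + B) x⟫) :
    (∀ t ∈ Set.Icc (0:ℝ) 1,
      IsUnit ((1 : H →L[ℝ] H) + t • A) ∧ IsUnit ((1 : H →L[ℝ] H) + t • B)) ∧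
    IsHS e (opLog (1 + A)) ∧
    hsNorm e (opLog (1 + A)) ≤
      hsNorm e A * (⨆ t : Set.Icc (0:ℝ) 1, ‖Ring.inverse ((1 : H →L[ℝ] H) + (t : ℝ) • A)‖) ∧
    IsHS e (opLog (1 + A) - opLog (1 + B)) ∧
    hsNorm e (opLog (1 + A) - opLog (1 + B)) ≤
      hsNorm e (A - B) *
        (⨆ t : Set.Icc (0:ℝ) 1, ‖Ring.inverse ((1 : H →L[ℝ] H) + (t : ℝ) • A)‖) *
        (⨆ t : Set.Icc (0:ℝ) 1, ‖Ring.inverse ((1 : H →L[ℝ] H) + (t : ℝ) • B)‖) ∧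
    ((IsSelfAdjoint A ∧ (∀ x : H, 0 ≤ ⟪x, A x⟫) ∧
      IsSelfAdjoint B ∧ (∀ x : H, 0 ≤ ⟪x, B x⟫)) →
      hsNorm e (opLog (1 + A)) ≤ hsNorm e A ∧
      hsNorm e (opLog (1 + A) - opLog (1 + B)) ≤ hsNorm e (A - B)) := by
  -- ===== setup =====
  have hcA : 0 < min 1 MA := lt_min one_pos hMA0
  have hcB : 0 < min 1 MB := lt_min one_pos hMB0
  have hcoA := uniform_coercive A hMA0 hMA
  have hcoB := uniform_coercive B hMB0 hMB
  have uA : ∀ t ∈ Set.Icc (0:ℝ) 1, IsUnit ((1 : H →L[ℝ] H) + t • A) :=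
    fun t ht => coercive_isUnit _ hcA (hcoA t ht)
  have uB : ∀ t ∈ Set.Icc (0:ℝ) 1, IsUnit ((1 : H →L[ℝ] H) + t • B) :=
    fun t ht => coercive_isUnit _ hcB (hcoB t ht)
  have rAle : ∀ t ∈ Set.Icc (0:ℝ) 1, ‖Ring.inverse ((1 : H →L[ℝ] H) + t • A)‖ ≤ (min 1 MA)⁻¹ :=
    fun t ht => coercive_inverse_bound _ hcA (hcoA t ht)
  have rBle : ∀ t ∈ Set.Icc (0:ℝ) 1, ‖Ring.inverse ((1 : H →L[ℝ] H) + t • B)‖ ≤ (min 1 MB)⁻¹ :=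
    fun t ht => coercive_inverse_bound _ hcB (hcoB t ht)
  haveI : Nonempty (Set.Icc (0:ℝ) 1) := ⟨⟨0, by norm_num⟩⟩
  set CA := ⨆ t : Set.Icc (0:ℝ) 1, ‖Ring.inverse ((1 : H →L[ℝ] H) + (t : ℝ) • A)‖ with hCAdef
  set CB := ⨆ t : Set.Icc (0:ℝ) 1, ‖Ring.inverse ((1 : H →L[ℝ] H) + (t : ℝ) • B)‖ with hCBdef
  have bddA : BddAbove (Set.range fun t : Set.Icc (0:ℝ) 1 =>
      ‖Ring.inverse ((1 : H →L[ℝ] H) + (t : ℝ) • A)‖) :=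
    ⟨(min 1 MA)⁻¹, by rintro _ ⟨t, rfl⟩; exact rAle t t.2⟩
  have bddB : BddAbove (Set.range fun t : Set.Icc (0:ℝ) 1 =>
      ‖Ring.inverse ((1 : H →L[ℝ] H) + (t : ℝ) • B)‖) :=
    ⟨(min 1 MB)⁻¹, by rintro _ ⟨t, rfl⟩; exact rBle t t.2⟩
  have hCAle : ∀ t : Set.Icc (0:ℝ) 1,
      ‖Ring.inverse ((1 : H →L[ℝ] H) + (t : ℝ) • A)‖ ≤ CA := fun t => le_ciSup bddA t
  have hCBle : ∀ t : Set.Icc (0:ℝ) 1,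
      ‖Ring.inverse ((1 : H →L[ℝ] H) + (t : ℝ) • B)‖ ≤ CB := fun t => le_ciSup bddB t
  have hCA0 : 0 ≤ CA := le_trans (norm_nonneg _) (hCAle ⟨0, by norm_num⟩)
  have hCB0 : 0 ≤ CB := le_trans (norm_nonneg _) (hCBle ⟨0, by norm_num⟩)
  have huicc : Set.uIcc (0:ℝ) 1 = Set.Icc 0 1 := Set.uIcc_of_le zero_le_one
  -- continuity and integrability
  have contA := inverse_continuousOn A uA
  have contB := inverse_continuousOn B uB
  have contfA : ContinuousOn (fun t : ℝ =>
      A * Ring.inverse ((1 : H →L[ℝ] H) + t • A)) (Set.Icc 0 1) := continuousOn_const.mul contA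
  have contfB : ContinuousOn (fun t : ℝ =>
      B * Ring.inverse ((1 : H →L[ℝ] H) + t • B)) (Set.Icc 0 1) := continuousOn_const.mul contB
  have intfA : IntervalIntegrable (fun t : ℝ =>
      A * Ring.inverse ((1 : H →L[ℝ] H) + t • A)) volume 0 1 :=
    (huicc ▸ contfA).intervalIntegrable
  have intfB : IntervalIntegrable (fun t : ℝ =>
      B * Ring.inverse ((1 : H →L[ℝ] H) + t • B)) volume 0 1 :=
    (huicc ▸ contfB).intervalIntegrable
  have opLogA : opLog (1 + A) = ∫ t in (0:ℝ)..1, A * Ring.inverse (1 + t • A) := by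
    unfold opLog; simp only [add_sub_cancel_left]
  have opLogB : opLog (1 + B) = ∫ t in (0:ℝ)..1, B * Ring.inverse (1 + t • B) := by
    unfold opLog; simp only [add_sub_cancel_left]
  have hAev : ∀ i, opLog (1 + A) (e i)
      = ∫ t in (0:ℝ)..1, (A * Ring.inverse ((1 : H →L[ℝ] H) + t • A)) (e i) := fun i => by
    rw [opLogA]; exact intervalIntegral_apply intfA (e i)
  have hBev : ∀ i, opLog (1 + B) (e i)
      = ∫ t in (0:ℝ)..1, (B * Ring.inverse ((1 : H →L[ℝ] H) + t • B)) (e i) := fun i => by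
    rw [opLogB]; exact intervalIntegral_apply intfB (e i)
  -- ===== first bound =====
  have hApt : ∀ i, ‖opLog (1 + A) (e i)‖ ≤ CA * ‖A (e i)‖ := by
    intro i
    rw [hAev i]
    have hb : ∀ t ∈ Set.uIoc (0:ℝ) 1,
        ‖(A * Ring.inverse ((1 : H →L[ℝ] H) + t • A)) (e i)‖ ≤ CA * ‖A (e i)‖ := by
      intro t ht
      have ht' : t ∈ Set.Icc (0:ℝ) 1 := by
        rw [Set.uIoc_of_le zero_le_one] at ht; exact Set.Ioc_subset_Icc_self ht
      have hcm : A * ((1 : H →L[ℝ] H) + t • A) = ((1 : H →L[ℝ] H) + t • A) * A := by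
        simp [mul_add, add_mul, mul_smul_comm, smul_mul_assoc]
      have hcomm := comm_inverse (uA t ht') hcm
      have h3 : (A * Ring.inverse ((1 : H →L[ℝ] H) + t • A)) (e i)
          = Ring.inverse ((1 : H →L[ℝ] H) + t • A) (A (e i)) := by rw [hcomm]; rfl
      rw [h3]
      calc ‖Ring.inverse ((1 : H →L[ℝ] H) + t • A) (A (e i))‖
          ≤ ‖Ring.inverse ((1 : H →L[ℝ] H) + t • A)‖ * ‖A (e i)‖ :=
            ContinuousLinearMap.le_opNorm _ _
        _ ≤ CA * ‖A (e i)‖ := mul_le_mul_of_nonneg_right (hCAle ⟨t, ht'⟩) (norm_nonneg _)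
    have := intervalIntegral.norm_integral_le_of_norm_le_const hb
    simpa using this
  have hsum1 : Summable fun i => CA ^ 2 * ‖A (e i)‖ ^ 2 := hAHS.mul_left _
  have hptsq : ∀ i, ‖opLog (1 + A) (e i)‖ ^ 2 ≤ CA ^ 2 * ‖A (e i)‖ ^ 2 := by
    intro i
    have h := hApt i
    nlinarith [norm_nonneg (opLog (1 + A) (e i)), norm_nonneg (A (e i))]
  have hIsHS_LA : IsHS e (opLog (1 + A)) :=
    Summable.of_nonneg_of_le (fun i => sq_nonneg _) hptsq hsum1
  have hbound1 : hsNorm e (opLog (1 + A)) ≤ hsNorm e A * CA := by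
    unfold hsNorm
    have h1 : ∑' i, ‖opLog (1 + A) (e i)‖ ^ 2 ≤ ∑' i, CA ^ 2 * ‖A (e i)‖ ^ 2 :=
      hIsHS_LA.tsum_le_tsum hptsq hsum1
    rw [tsum_mul_left] at h1
    calc Real.sqrt (∑' i, ‖opLog (1 + A) (e i)‖ ^ 2)
        ≤ Real.sqrt (CA ^ 2 * ∑' i, ‖A (e i)‖ ^ 2) := Real.sqrt_le_sqrt h1
      _ = CA * Real.sqrt (∑' i, ‖A (e i)‖ ^ 2) := by
          rw [Real.sqrt_mul (sq_nonneg CA), Real.sqrt_sq hCA0]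
      _ = Real.sqrt (∑' i, ‖A (e i)‖ ^ 2) * CA := mul_comm _ _
    -- ===== difference bound =====
  have hIsHS_D : IsHS e (A - B) := by
    refine Summable.of_nonneg_of_le (fun i => sq_nonneg _) (fun i => ?_)
      ((hAHS.mul_left 2).add (hBHS.mul_left 2))
    have h1 : ‖(A - B) (e i)‖ ≤ ‖A (e i)‖ + ‖B (e i)‖ := by
      rw [ContinuousLinearMap.sub_apply]; exact norm_sub_le _ _
    nlinarith [norm_nonneg ((A - B) (e i)), norm_nonneg (A (e i)), norm_nonneg (B (e i)),
      sq_nonneg (‖A (e i)‖ - ‖B (e i)‖)]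
  have intfAv : ∀ i, IntervalIntegrable
      (fun t : ℝ => (A * Ring.inverse ((1 : H →L[ℝ] H) + t • A)) (e i)) volume 0 1 := fun i =>
    (huicc ▸ ((ContinuousLinearMap.apply ℝ H (e i)).continuous.comp_continuousOn
      contfA)).intervalIntegrable
  have intfBv : ∀ i, IntervalIntegrable
      (fun t : ℝ => (B * Ring.inverse ((1 : H →L[ℝ] H) + t • B)) (e i)) volume 0 1 := fun i =>
    (huicc ▸ ((ContinuousLinearMap.apply ℝ H (e i)).continuous.comp_continuousOn
      contfB)).intervalIntegrable
  have hLev : ∀ i, ((opLog (1 + A) - opLog (1 + B) : H →L[ℝ] H)) (e i)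
      = ∫ t in (0:ℝ)..1, (Ring.inverse ((1 : H →L[ℝ] H) + t • A) *
          ((A - B) * Ring.inverse ((1 : H →L[ℝ] H) + t • B))) (e i) := by
    intro i
    have h1 : ((opLog (1 + A) - opLog (1 + B) : H →L[ℝ] H)) (e i)
        = opLog (1 + A) (e i) - opLog (1 + B) (e i) := rfl
    rw [h1, hAev i, hBev i, ← intervalIntegral.integral_sub (intfAv i) (intfBv i)]
    refine intervalIntegral.integral_congr fun t ht => ?_
    rw [huicc] at ht
    have hdi := diff_identity A B t (uA t ht) (uB t ht)
    show _ = _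
    rw [← ContinuousLinearMap.sub_apply, hdi]
  have contg : ∀ i, ContinuousOn (fun t : ℝ => ‖((A - B) * Ring.inverse ((1 : H →L[ℝ] H) + t • B)) (e i)‖) (Set.Icc 0 1) := fun i =>
    ((ContinuousLinearMap.apply ℝ H (e i)).continuous.comp_continuousOn
      ((continuousOn_const (c := A - B)).mul contB)).norm
  have contLv : ∀ i, ContinuousOn (fun t : ℝ =>
      (Ring.inverse ((1 : H →L[ℝ] H) + t • A) *
        ((A - B) * Ring.inverse ((1 : H →L[ℝ] H) + t • B))) (e i)) (Set.Icc 0 1) := fun i =>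
    (ContinuousLinearMap.apply ℝ H (e i)).continuous.comp_continuousOn
      (contA.mul ((continuousOn_const (c := A - B)).mul contB))
  have hLpt : ∀ i, ‖((opLog (1 + A) - opLog (1 + B) : H →L[ℝ] H)) (e i)‖
      ≤ CA * ∫ t in (0:ℝ)..1, ‖((A - B) * Ring.inverse ((1 : H →L[ℝ] H) + t • B)) (e i)‖ := by
    intro i
    rw [hLev i]
    have int1 : IntervalIntegrable (fun t : ℝ =>
        ‖(Ring.inverse ((1 : H →L[ℝ] H) + t • A) *
          ((A - B) * Ring.inverse ((1 : H →L[ℝ] H) + t • B))) (e i)‖) volume 0 1 :=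
      (huicc ▸ (contLv i).norm).intervalIntegrable
    have int2 : IntervalIntegrable (fun t : ℝ => CA * ‖((A - B) * Ring.inverse ((1 : H →L[ℝ] H) + t • B)) (e i)‖) volume 0 1 :=
      (huicc ▸ (continuousOn_const.mul (contg i))).intervalIntegrable
    have hb : ∀ t ∈ Set.Icc (0:ℝ) 1,
        ‖(Ring.inverse ((1 : H →L[ℝ] H) + t • A) *
          ((A - B) * Ring.inverse ((1 : H →L[ℝ] H) + t • B))) (e i)‖ ≤ CA * ‖((A - B) * Ring.inverse ((1 : H →L[ℝ] H) + t • B)) (e i)‖ := by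
      intro t ht
      have h3 : (Ring.inverse ((1 : H →L[ℝ] H) + t • A) *
          ((A - B) * Ring.inverse ((1 : H →L[ℝ] H) + t • B))) (e i)
          = Ring.inverse ((1 : H →L[ℝ] H) + t • A)
              (((A - B) * Ring.inverse ((1 : H →L[ℝ] H) + t • B)) (e i)) := rfl
      rw [h3]
      calc ‖Ring.inverse ((1 : H →L[ℝ] H) + t • A)
            (((A - B) * Ring.inverse ((1 : H →L[ℝ] H) + t • B)) (e i))‖
          ≤ ‖Ring.inverse ((1 : H →L[ℝ] H) + t • A)‖ * ‖((A - B) * Ring.inverse ((1 : H →L[ℝ] H) + t • B)) (e i)‖ :=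
            ContinuousLinearMap.le_opNorm _ _
        _ ≤ CA * ‖((A - B) * Ring.inverse ((1 : H →L[ℝ] H) + t • B)) (e i)‖ := mul_le_mul_of_nonneg_right (hCAle ⟨t, ht⟩) (norm_nonneg _)
    calc ‖∫ t in (0:ℝ)..1, (Ring.inverse ((1 : H →L[ℝ] H) + t • A) *
            ((A - B) * Ring.inverse ((1 : H →L[ℝ] H) + t • B))) (e i)‖
        ≤ ∫ t in (0:ℝ)..1, ‖(Ring.inverse ((1 : H →L[ℝ] H) + t • A) *
            ((A - B) * Ring.inverse ((1 : H →L[ℝ] H) + t • B))) (e i)‖ :=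
          intervalIntegral.norm_integral_le_integral_norm zero_le_one
      _ ≤ ∫ t in (0:ℝ)..1, CA * ‖((A - B) * Ring.inverse ((1 : H →L[ℝ] H) + t • B)) (e i)‖ :=
          intervalIntegral.integral_mono_on zero_le_one int1 int2 hb
      _ = CA * ∫ t in (0:ℝ)..1, ‖((A - B) * Ring.inverse ((1 : H →L[ℝ] H) + t • B)) (e i)‖ := intervalIntegral.integral_const_mul _ _
  have hQ : ∀ i, ENNReal.ofReal (∫ t in (0:ℝ)..1, ‖((A - B) * Ring.inverse ((1 : H →L[ℝ] H) + t • B)) (e i)‖ ^ 2)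
      = ∫⁻ t in Set.Ioc (0:ℝ) 1, ENNReal.ofReal (‖((A - B) * Ring.inverse ((1 : H →L[ℝ] H) + t • B)) (e i)‖ ^ 2) := by
    intro i
    rw [intervalIntegral.integral_of_le zero_le_one]
    refine ofReal_integral_eq_lintegral_ofReal ?_
      (Eventually.of_forall fun t => sq_nonneg _)
    exact ((huicc ▸ ((contg i).pow 2)).intervalIntegrable).1
  have hmeas : ∀ i, AEMeasurable (fun t : ℝ => ENNReal.ofReal (‖((A - B) * Ring.inverse ((1 : H →L[ℝ] H) + t • B)) (e i)‖ ^ 2))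
      (volume.restrict (Set.Ioc (0:ℝ) 1)) := by
    intro i
    refine ENNReal.measurable_ofReal.comp_aemeasurable ?_
    exact (((contg i).pow 2).mono Set.Ioc_subset_Icc_self).aemeasurable measurableSet_Ioc
  have hswap := lintegral_tsum hmeas
  have hinner : ∀ t ∈ Set.Ioc (0:ℝ) 1,
      (∑' i, ENNReal.ofReal (‖((A - B) * Ring.inverse ((1 : H →L[ℝ] H) + t • B)) (e i)‖ ^ 2)) ≤ ENNReal.ofReal (CB ^ 2) * sE e (A - B) := by
    intro t ht
    have ht' : t ∈ Set.Icc (0:ℝ) 1 := Set.Ioc_subset_Icc_self ht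
    calc (∑' i, ENNReal.ofReal (‖((A - B) * Ring.inverse ((1 : H →L[ℝ] H) + t • B)) (e i)‖ ^ 2))
        = sE e ((A - B) * Ring.inverse ((1 : H →L[ℝ] H) + t • B)) := rfl
      _ ≤ ENNReal.ofReal (‖Ring.inverse ((1 : H →L[ℝ] H) + t • B)‖ ^ 2) * sE e (A - B) :=
          sE_comp_le_right e _ _
      _ ≤ ENNReal.ofReal (CB ^ 2) * sE e (A - B) := by
          refine mul_le_mul_left (ENNReal.ofReal_le_ofReal ?_) _
          have h4 := hCBle ⟨t, ht'⟩
          nlinarith [norm_nonneg (Ring.inverse ((1 : H →L[ℝ] H) + t • B))]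
  have hlint : (∫⁻ t in Set.Ioc (0:ℝ) 1, ∑' i, ENNReal.ofReal (‖((A - B) * Ring.inverse ((1 : H →L[ℝ] H) + t • B)) (e i)‖ ^ 2))
      ≤ ENNReal.ofReal (CB ^ 2) * sE e (A - B) := by
    calc (∫⁻ t in Set.Ioc (0:ℝ) 1, ∑' i, ENNReal.ofReal (‖((A - B) * Ring.inverse ((1 : H →L[ℝ] H) + t • B)) (e i)‖ ^ 2))
        ≤ ∫⁻ _t in Set.Ioc (0:ℝ) 1, ENNReal.ofReal (CB ^ 2) * sE e (A - B) :=
          setLIntegral_mono measurable_const hinner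
      _ = (ENNReal.ofReal (CB ^ 2) * sE e (A - B)) * volume (Set.Ioc (0:ℝ) 1) :=
          setLIntegral_const _ _
      _ = ENNReal.ofReal (CB ^ 2) * sE e (A - B) := by
          simp [Real.volume_Ioc]
  have key : sE e (opLog (1 + A) - opLog (1 + B)) ≤
      ENNReal.ofReal (CA ^ 2) * (ENNReal.ofReal (CB ^ 2) * sE e (A - B)) := by
    calc sE e (opLog (1 + A) - opLog (1 + B))
        = ∑' i, ENNReal.ofReal (‖((opLog (1 + A) - opLog (1 + B) : H →L[ℝ] H)) (e i)‖ ^ 2) := rfl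
      _ ≤ ∑' i, ENNReal.ofReal (CA ^ 2 * ((∫ t in (0:ℝ)..1, ‖((A - B) * Ring.inverse ((1 : H →L[ℝ] H) + t • B)) (e i)‖) ^ 2)) := by
          refine ENNReal.tsum_le_tsum fun i => ENNReal.ofReal_le_ofReal ?_
          have h := hLpt i
          have h2 : (0:ℝ) ≤ ∫ t in (0:ℝ)..1, ‖((A - B) * Ring.inverse ((1 : H →L[ℝ] H) + t • B)) (e i)‖ :=
            intervalIntegral.integral_nonneg zero_le_one (fun t _ => norm_nonneg _)
          nlinarith [norm_nonneg (((opLog (1 + A) - opLog (1 + B) : H →L[ℝ] H)) (e i))]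
      _ ≤ ∑' i, ENNReal.ofReal (CA ^ 2 * (∫ t in (0:ℝ)..1, ‖((A - B) * Ring.inverse ((1 : H →L[ℝ] H) + t • B)) (e i)‖ ^ 2)) := by
          refine ENNReal.tsum_le_tsum fun i => ENNReal.ofReal_le_ofReal ?_
          have h5 := sq_integral_le _ (contg i)
          nlinarith [sq_nonneg CA]
      _ = ENNReal.ofReal (CA ^ 2) * ∑' i, ENNReal.ofReal (∫ t in (0:ℝ)..1, ‖((A - B) * Ring.inverse ((1 : H →L[ℝ] H) + t • B)) (e i)‖ ^ 2) := by
          rw [← ENNReal.tsum_mul_left]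
          exact tsum_congr fun i => ENNReal.ofReal_mul (sq_nonneg _)
      _ = ENNReal.ofReal (CA ^ 2) *
            ∑' i, ∫⁻ t in Set.Ioc (0:ℝ) 1, ENNReal.ofReal (‖((A - B) * Ring.inverse ((1 : H →L[ℝ] H) + t • B)) (e i)‖ ^ 2) := by
          rw [tsum_congr hQ]
      _ = ENNReal.ofReal (CA ^ 2) *
            ∫⁻ t in Set.Ioc (0:ℝ) 1, ∑' i, ENNReal.ofReal (‖((A - B) * Ring.inverse ((1 : H →L[ℝ] H) + t • B)) (e i)‖ ^ 2) := by rw [hswap]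
      _ ≤ ENNReal.ofReal (CA ^ 2) * (ENNReal.ofReal (CB ^ 2) * sE e (A - B)) :=
          mul_le_mul_right hlint _
  have hfin : ENNReal.ofReal (CA ^ 2) * (ENNReal.ofReal (CB ^ 2) * sE e (A - B)) ≠ ⊤ := by
    have h6 : sE e (A - B) ≠ ⊤ := by
      rw [sE_eq_ofReal e hIsHS_D]; exact ENNReal.ofReal_ne_top
    exact ENNReal.mul_ne_top ENNReal.ofReal_ne_top
      (ENNReal.mul_ne_top ENNReal.ofReal_ne_top h6)
  have hIsHS_L : IsHS e (opLog (1 + A) - opLog (1 + B)) :=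
    isHS_of_sE_ne_top e (ne_top_of_le_ne_top hfin key)
  have hbound2 : hsNorm e (opLog (1 + A) - opLog (1 + B)) ≤ hsNorm e (A - B) * CA * CB := by
    unfold hsNorm
    rw [tsum_sq_eq e hIsHS_L]
    have h1 : (sE e (opLog (1 + A) - opLog (1 + B))).toReal
        ≤ CA ^ 2 * (CB ^ 2 * ∑' i, ‖(A - B) (e i)‖ ^ 2) := by
      have h2 := ENNReal.toReal_mono hfin key
      rw [ENNReal.toReal_mul, ENNReal.toReal_mul, ENNReal.toReal_ofReal (sq_nonneg CA),
        ENNReal.toReal_ofReal (sq_nonneg CB), ← tsum_sq_eq e hIsHS_D] at h2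
      exact h2
    calc Real.sqrt (sE e (opLog (1 + A) - opLog (1 + B))).toReal
        ≤ Real.sqrt (CA ^ 2 * (CB ^ 2 * ∑' i, ‖(A - B) (e i)‖ ^ 2)) := Real.sqrt_le_sqrt h1
      _ = Real.sqrt (∑' i, ‖(A - B) (e i)‖ ^ 2) * CA * CB := by
          rw [Real.sqrt_mul (sq_nonneg CA), Real.sqrt_mul (sq_nonneg CB),
            Real.sqrt_sq hCA0, Real.sqrt_sq hCB0]
          ring
  -- ===== conclusion =====
  refine ⟨fun t ht => ⟨uA t ht, uB t ht⟩, hIsHS_LA, hbound1, hIsHS_L, hbound2, ?_⟩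
  rintro ⟨-, hApos, -, hBpos⟩
  have hCA1 : CA ≤ 1 := by
    rw [hCAdef]
    refine ciSup_le fun t => ?_
    have h1 : ∀ x : H, 1 * ‖x‖ ^ 2 ≤ ⟪x, ((1 : H →L[ℝ] H) + (t : ℝ) • A) x⟫ := by
      intro x
      have hax : ((1 : H →L[ℝ] H) + (t : ℝ) • A) x = x + (t : ℝ) • A x := by
        simp [ContinuousLinearMap.add_apply]
      rw [hax, inner_add_right, real_inner_smul_right, real_inner_self_eq_norm_sq]
      have h7 := mul_nonneg t.2.1 (hApos x)
      nlinarith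
    have h8 := coercive_inverse_bound _ one_pos h1
    simpa using h8
  have hCB1 : CB ≤ 1 := by
    rw [hCBdef]
    refine ciSup_le fun t => ?_
    have h1 : ∀ x : H, 1 * ‖x‖ ^ 2 ≤ ⟪x, ((1 : H →L[ℝ] H) + (t : ℝ) • B) x⟫ := by
      intro x
      have hax : ((1 : H →L[ℝ] H) + (t : ℝ) • B) x = x + (t : ℝ) • B x := by
        simp [ContinuousLinearMap.add_apply]
      rw [hax, inner_add_right, real_inner_smul_right, real_inner_self_eq_norm_sq]
      have h7 := mul_nonneg t.2.1 (hBpos x)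
      nlinarith
    have h8 := coercive_inverse_bound _ one_pos h1
    simpa using h8
  have hsA0 : 0 ≤ hsNorm e A := Real.sqrt_nonneg _
  have hsD0 : 0 ≤ hsNorm e (A - B) := Real.sqrt_nonneg _
  constructor
  · calc hsNorm e (opLog (1 + A)) ≤ hsNorm e A * CA := hbound1
      _ ≤ hsNorm e A * 1 := mul_le_mul_of_nonneg_left hCA1 hsA0
      _ = hsNorm e A := mul_one _
  · calc hsNorm e (opLog (1 + A) - opLog (1 + B)) ≤ hsNorm e (A - B) * CA * CB := hbound2
      _ = hsNorm e (A - B) * (CA * CB) := by ring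
      _ ≤ hsNorm e (A - B) * 1 :=
          mul_le_mul_of_nonneg_left (by nlinarith [mul_nonneg hCA0 (sub_nonneg.2 hCB1)]) hsD0
      _ = hsNorm e (A - B) := mul_one _
end
end
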